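/- arXiv:1203.2899 — 2 statements merged into one kernel-verified Lean document; each statement's English description precedes it below -/
import Mathlib

section
/- Under assumption A1 (in particular ‖S_{M_n}t − t‖₂ → 0 for all t ∈ L²(dxdy)), the variance of the linear part converges to the efficient variance: n Var(P_n L) → Λ(f,η) as n → ∞, where L is built with M = M_n. -/
/-!
Write `L = 2 (W − κ)` with the constant `κ = 2AᵀB − AᵀCA` and `W = Aᵀρ + BᵀP − AᵀCP`, where
`ρ_i(x,y) = ∫ p_i(x,u) η(x,u,y) du` and `P = (p_i)`. Since the observations are i.i.d.,
`n Var(P_n L) = Var_f(L) = 4 Var_f(W)`.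

By the symmetry of `η`, `Aᵀρ` is `g` computed from `S_M f` instead of `f`, and the coefficients
`B − CᵀA` are those of `g − Aᵀρ`; hence `W − g = (I − S_M)(Aᵀρ − g)`, and Bessel's inequality
gives `‖W − g‖₂ ≤ 2 ‖Aᵀρ − g‖₂`. Cauchy–Schwarz in the variable `u` bounds
`‖Aᵀρ − g‖₂ ≤ ‖η‖_∞ Δ_Y ‖S_M f − f‖₂`, which tends to `0` by A1. As `f` is a bounded density,
`W → g` in `L²(f)`, and the variance is continuous for this convergence:
`4 Var_f(W) → 4 Var_f(g) = Λ(f,η)`.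
-/

open MeasureTheory ProbabilityTheory Filter Set Topology

noncomputable section

namespace DaVeigaGamboa

/-- Iterated double integral over `[a,b] × [c,d]`. -/
def I2 (a b c d : ℝ) (h : ℝ → ℝ → ℝ) : ℝ :=
  ∫ x in Icc a b, ∫ y in Icc c d, h x y

/-- Iterated triple integral over `[a,b] × [c,d] × [c,d]`. -/
def I3 (a b c d : ℝ) (h : ℝ → ℝ → ℝ → ℝ) : ℝ :=
  ∫ x in Icc a b, ∫ y₁ in Icc c d, ∫ y₂ in Icc c d, h x y₁ y₂

/-- The tensor basis `p_i(x,y) = α_{i₁}(x) β_{i₂}(y)`. -/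
def tns {ι₁ ι₂ : Type*} (α : ι₁ → ℝ → ℝ) (β : ι₂ → ℝ → ℝ) (i : ι₁ × ι₂)
    (x y : ℝ) : ℝ := α i.1 x * β i.2 y

/-- Coefficient `∬ h p_i` of `h` on the basis element `p_i`. -/
def coef {ι : Type*} (a b c d : ℝ) (p : ι → ℝ → ℝ → ℝ) (h : ℝ → ℝ → ℝ) (i : ι) : ℝ :=
  I2 a b c d fun x y => h x y * p i x y

/-- Orthogonal projection `S_M h` onto the span of `(p_i)_{i ∈ M}`. -/
def SM {ι : Type*} (a b c d : ℝ) (p : ι → ℝ → ℝ → ℝ) (h : ℝ → ℝ → ℝ)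
    (M : Finset ι) (x y : ℝ) : ℝ := ∑ i ∈ M, coef a b c d p h i * p i x y

/-- `L²` norm on the rectangle. -/
def norm2 (a b c d : ℝ) (h : ℝ → ℝ → ℝ) : ℝ :=
  Real.sqrt (I2 a b c d fun x y => (h x y) ^ 2)

/-- The quadratic functional `θ(f) = ∭ η(x,y₁,y₂) f(x,y₁) f(x,y₂)`. -/
def theta (a b c d : ℝ) (η : ℝ → ℝ → ℝ → ℝ) (f : ℝ → ℝ → ℝ) : ℝ :=
  I3 a b c d fun x y₁ y₂ => η x y₁ y₂ * f x y₁ * f x y₂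

/-- `g(x,y) = ∫ f(x,u) η(x,y,u) du`. -/
def gfun (c d : ℝ) (η : ℝ → ℝ → ℝ → ℝ) (f : ℝ → ℝ → ℝ) (x y : ℝ) : ℝ :=
  ∫ u in Icc c d, f x u * η x y u

/-- The efficient asymptotic variance `Λ(f,η)`. -/
def Lam (a b c d : ℝ) (η : ℝ → ℝ → ℝ → ℝ) (f : ℝ → ℝ → ℝ) : ℝ :=
  4 * ((I2 a b c d fun x y => (gfun c d η f x y) ^ 2 * f x y)
    - (I2 a b c d fun x y => gfun c d η f x y * f x y) ^ 2)

/-- The constants `c_{ii'} = ∭ p_i(x,y₁) p_{i'}(x,y₂) η(x,y₁,y₂)`. -/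
def cmat {ι : Type*} (a b c d : ℝ) (p : ι → ℝ → ℝ → ℝ) (η : ℝ → ℝ → ℝ → ℝ)
    (i i' : ι) : ℝ :=
  I3 a b c d fun x y₁ y₂ => p i x y₁ * p i' x y₂ * η x y₁ y₂

/-- `b_i = ∬ g p_i`. -/
def bcoef {ι : Type*} (a b c d : ℝ) (p : ι → ℝ → ℝ → ℝ) (η : ℝ → ℝ → ℝ → ℝ)
    (f : ℝ → ℝ → ℝ) (i : ι) : ℝ :=
  coef a b c d p (gfun c d η f) i

/-- The estimator `θ̂_n` of the crossed quadratic functional, built on the index set `M`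
and the first `n` observations. -/
def thetaHat {Ω ι : Type*} (a b c d : ℝ) (p : ι → ℝ → ℝ → ℝ)
    (η : ℝ → ℝ → ℝ → ℝ) (X Y : ℕ → Ω → ℝ) (M : Finset ι) (n : ℕ) (ω : Ω) : ℝ :=
  (2 / ((n : ℝ) * ((n : ℝ) - 1))) *
    ∑ i ∈ M, ∑ j ∈ Finset.range n, ∑ k ∈ (Finset.range n).erase j,
      p i (X j ω) (Y j ω) *
        ∫ u in Icc c d, p i (X k ω) u * η (X k ω) u (Y k ω)
  - (1 / ((n : ℝ) * ((n : ℝ) - 1))) *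
    ∑ i ∈ M, ∑ i' ∈ M, ∑ j ∈ Finset.range n, ∑ k ∈ (Finset.range n).erase j,
      p i (X j ω) (Y j ω) * p i' (X k ω) (Y k ω) * cmat a b c d p η i i'

/-- The law `ν_f` on `ℝ²` with density `f` w.r.t. the Lebesgue measure. -/
def nu (f : ℝ → ℝ → ℝ) : Measure (ℝ × ℝ) :=
  volume.withDensity fun q => ENNReal.ofReal (f q.1 q.2)

/-- Centered kernels of the Hoeffding decomposition: `q_i = p_i - a_i`. -/
def qfun {ι : Type*} (a b c d : ℝ) (p : ι → ℝ → ℝ → ℝ) (f : ℝ → ℝ → ℝ)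
    (i : ι) (x y : ℝ) : ℝ := p i x y - coef a b c d p f i

/-- `r_i(x,y) = ∫ p_i(x,u) η(x,u,y) du - b_i`. -/
def rfun {ι : Type*} (a b c d : ℝ) (p : ι → ℝ → ℝ → ℝ) (η : ℝ → ℝ → ℝ → ℝ)
    (f : ℝ → ℝ → ℝ) (i : ι) (x y : ℝ) : ℝ :=
  (∫ u in Icc c d, p i x u * η x u y) - bcoef a b c d p η f i

/-- The degenerate second-order kernel `K = 2QᵀR − QᵀCQ`. -/
def Kker {ι : Type*} (a b c d : ℝ) (p : ι → ℝ → ℝ → ℝ) (η : ℝ → ℝ → ℝ → ℝ)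
    (f : ℝ → ℝ → ℝ) (M : Finset ι) (x₁ y₁ x₂ y₂ : ℝ) : ℝ :=
  2 * ∑ i ∈ M, qfun a b c d p f i x₁ y₁ * rfun a b c d p η f i x₂ y₂
  - ∑ i ∈ M, ∑ i' ∈ M,
      qfun a b c d p f i x₁ y₁ * cmat a b c d p η i i' * qfun a b c d p f i' x₂ y₂

/-- The first-order kernel `L = 2AᵀR + 2BᵀQ − 2AᵀCQ`. -/
def Lker {ι : Type*} (a b c d : ℝ) (p : ι → ℝ → ℝ → ℝ) (η : ℝ → ℝ → ℝ → ℝ)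
    (f : ℝ → ℝ → ℝ) (M : Finset ι) (x y : ℝ) : ℝ :=
  2 * ∑ i ∈ M, coef a b c d p f i * rfun a b c d p η f i x y
  + 2 * ∑ i ∈ M, bcoef a b c d p η f i * qfun a b c d p f i x y
  - 2 * ∑ i ∈ M, ∑ i' ∈ M,
      coef a b c d p f i * cmat a b c d p η i i' * qfun a b c d p f i' x y

/-- The degenerate U-statistic part `U_n K`. -/
def UnK {Ω ι : Type*} (a b c d : ℝ) (p : ι → ℝ → ℝ → ℝ) (η : ℝ → ℝ → ℝ → ℝ)
    (f : ℝ → ℝ → ℝ) (X Y : ℕ → Ω → ℝ) (M : Finset ι) (n : ℕ) (ω : Ω) : ℝ :=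
  (1 / ((n : ℝ) * ((n : ℝ) - 1))) *
    ∑ j ∈ Finset.range n, ∑ k ∈ (Finset.range n).erase j,
      Kker a b c d p η f M (X j ω) (Y j ω) (X k ω) (Y k ω)

/-- The empirical-mean part `P_n L`. -/
def PnL {Ω ι : Type*} (a b c d : ℝ) (p : ι → ℝ → ℝ → ℝ) (η : ℝ → ℝ → ℝ → ℝ)
    (f : ℝ → ℝ → ℝ) (X Y : ℕ → Ω → ℝ) (M : Finset ι) (n : ℕ) (ω : Ω) : ℝ :=
  (1 / (n : ℝ)) * ∑ j ∈ Finset.range n,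
    Lker a b c d p η f M (X j ω) (Y j ω)

/-- Membership of `h` in the ellipsoid `E` associated with the positive sequence `cseq`,
expressed through the coefficients of `h` in the orthonormal basis `(p_i)`. -/
def inEllipsoid {ι : Type*} (a b c d : ℝ) (p : ι → ℝ → ℝ → ℝ) (cseq : ι → ℝ)
    (h : ℝ → ℝ → ℝ) : Prop :=
  Summable (fun i => (coef a b c d p h i / cseq i) ^ 2) ∧
    ∑' i, (coef a b c d p h i / cseq i) ^ 2 ≤ 1

/-- `sup_{i ∉ M} |c_i|²`. -/
def supTail {ι : Type*} (cseq : ι → ℝ) (M : Finset ι) : ℝ :=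
  sSup ((fun i => (cseq i) ^ 2) '' {i | i ∉ M})

/-- Convergence in distribution of real random variables towards the law `ν`,
tested against bounded continuous functions. -/
def CvgInDist {Ω : Type*} [MeasurableSpace Ω] (μ : Measure Ω)
    (Z : ℕ → Ω → ℝ) (ν : Measure ℝ) : Prop :=
  ∀ g : ℝ → ℝ, Continuous g → (∃ C, ∀ x, |g x| ≤ C) →
    Tendsto (fun n => ∫ ω, g (Z n ω) ∂μ) atTop (𝓝 (∫ x, g x ∂ν))


/-- Conditional expectation `m(x) = ∫ φ(y) f(x,y) dy / ∫ f(x,y) dy` of `φ(Y)` given `X = x`. -/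
def mfun (c d : ℝ) (φ : ℝ → ℝ) (f : ℝ → ℝ → ℝ) (x : ℝ) : ℝ :=
  (∫ y in Icc c d, φ y * f x y) / ∫ y in Icc c d, f x y

/-- Conditional second moment `v(x) = ∫ φ(y)² f(x,y) dy / ∫ f(x,y) dy`. -/
def vfun (c d : ℝ) (φ : ℝ → ℝ) (f : ℝ → ℝ → ℝ) (x : ℝ) : ℝ :=
  (∫ y in Icc c d, φ y ^ 2 * f x y) / ∫ y in Icc c d, f x y

/-- The functional `T(f) = ∬ ψ(m(x)) f(x,y) dx dy = E[ψ(E(φ(Y)|X))]`. -/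
def Tfunc (a b c d : ℝ) (φ ψ : ℝ → ℝ) (f : ℝ → ℝ → ℝ) : ℝ :=
  I2 a b c d fun x y => ψ (mfun c d φ f x) * f x y

/-- The linear kernel `H(h,x,y) = [φ(y) − m_h(x)] ψ'(m_h(x)) + ψ(m_h(x))`. -/
def Hker (c d : ℝ) (φ ψ : ℝ → ℝ) (h : ℝ → ℝ → ℝ) (x y : ℝ) : ℝ :=
  (φ y - mfun c d φ h x) * deriv ψ (mfun c d φ h x) + ψ (mfun c d φ h x)

/-- The second-order kernel
`K(h,x,y,z) = (1/2) ψ''(m_h(x)) (m_h(x)−φ(y)) (m_h(x)−φ(z)) / ∫ h(x,u) du`. -/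
def Kfker (c d : ℝ) (φ ψ : ℝ → ℝ) (h : ℝ → ℝ → ℝ) (x y z : ℝ) : ℝ :=
  (1 / 2) * deriv (deriv ψ) (mfun c d φ h x) * (mfun c d φ h x - φ y) *
    (mfun c d φ h x - φ z) / ∫ u in Icc c d, h x u

/-- The efficient asymptotic variance
`C(f) = E(Var(φ(Y)|X) [ψ'(E(φ(Y)|X))]²) + Var(ψ(E(φ(Y)|X)))` expressed with `f`. -/
def Cvar (a b c d : ℝ) (φ ψ : ℝ → ℝ) (f : ℝ → ℝ → ℝ) : ℝ :=
  I2 a b c d (fun x y =>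
    (vfun c d φ f x - mfun c d φ f x ^ 2) * deriv ψ (mfun c d φ f x) ^ 2 * f x y)
  + (I2 a b c d (fun x y => ψ (mfun c d φ f x) ^ 2 * f x y)
      - (I2 a b c d fun x y => ψ (mfun c d φ f x) * f x y) ^ 2)

/-- `L^q` norm on the rectangle. -/
def normLq (a b c d q : ℝ) (h : ℝ → ℝ → ℝ) : ℝ :=
  (I2 a b c d fun x y => |h x y| ^ q) ^ (1 / q)

/-- `2 AᵀB − AᵀCA`, the deterministic part of the Hoeffding decomposition. -/
def ABterm {ι : Type*} (a b c d : ℝ) (p : ι → ℝ → ℝ → ℝ) (η : ℝ → ℝ → ℝ → ℝ)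
    (f : ℝ → ℝ → ℝ) (M : Finset ι) : ℝ :=
  2 * ∑ i ∈ M, coef a b c d p f i * bcoef a b c d p η f i
  - ∑ i ∈ M, ∑ i' ∈ M,
      coef a b c d p f i * cmat a b c d p η i i' * coef a b c d p f i'

/-- Crossed-quadratic-functional estimator with a (possibly random) kernel `ηω`,
built on the `n₂` observations of indices `n₀, …, n₀ + n₂ − 1`. -/
def QHatK {Ω ι : Type*} (a b c d : ℝ) (p : ι → ℝ → ℝ → ℝ)
    (ηω : Ω → ℝ → ℝ → ℝ → ℝ) (X Y : ℕ → Ω → ℝ) (M : Finset ι)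
    (n₀ n₂ : ℕ) (ω : Ω) : ℝ :=
  (2 / ((n₂ : ℝ) * ((n₂ : ℝ) - 1))) *
    ∑ i ∈ M, ∑ j ∈ Finset.range n₂, ∑ k ∈ (Finset.range n₂).erase j,
      p i (X (n₀ + j) ω) (Y (n₀ + j) ω) *
        ∫ u in Icc c d, p i (X (n₀ + k) ω) u * ηω ω (X (n₀ + k) ω) u (Y (n₀ + k) ω)
  - (1 / ((n₂ : ℝ) * ((n₂ : ℝ) - 1))) *
    ∑ i ∈ M, ∑ i' ∈ M, ∑ j ∈ Finset.range n₂, ∑ k ∈ (Finset.range n₂).erase j,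
      p i (X (n₀ + j) ω) (Y (n₀ + j) ω) * p i' (X (n₀ + k) ω) (Y (n₀ + k) ω) *
        I3 a b c d fun x y₁ y₂ => p i x y₁ * p i' x y₂ * ηω ω x y₁ y₂

/-- The estimator `T̂_n` of `T(f)`, built from the preliminary estimator `fhat`
and the `n₂` observations of indices `n₀, …, n₀ + n₂ − 1`. -/
def THat {Ω ι : Type*} (a b c d : ℝ) (p : ι → ℝ → ℝ → ℝ) (φ ψ : ℝ → ℝ)
    (fhat : Ω → ℝ → ℝ → ℝ) (X Y : ℕ → Ω → ℝ) (M : Finset ι)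
    (n₀ n₂ : ℕ) (ω : Ω) : ℝ :=
  (1 / (n₂ : ℝ)) * ∑ j ∈ Finset.range n₂,
      Hker c d φ ψ (fhat ω) (X (n₀ + j) ω) (Y (n₀ + j) ω)
  + QHatK a b c d p (fun ω' => Kfker c d φ ψ (fhat ω')) X Y M n₀ n₂ ω


section L2

variable {γ : Type*} [MeasurableSpace γ] {m : Measure γ}

theorem integral_mul_eq_inner_toLp {u v : γ → ℝ} (hu : MemLp u 2 m) (hv : MemLp v 2 m) :
    ∫ x, u x * v x ∂m = inner ℝ (hu.toLp u) (hv.toLp v) := by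
  rw [L2.inner_def]
  refine integral_congr_ae ?_
  filter_upwards [hu.coeFn_toLp, hv.coeFn_toLp] with x hux hvx
  simp [hux, hvx, mul_comm]

theorem integral_sq_eq_norm_toLp_sq {u : γ → ℝ} (hu : MemLp u 2 m) :
    ∫ x, u x ^ 2 ∂m = ‖hu.toLp u‖ ^ 2 := by
  simp_rw [sq, integral_mul_eq_inner_toLp hu hu, real_inner_self_eq_norm_mul_norm]

theorem sq_integral_mul_le {u v : γ → ℝ} (hu : MemLp u 2 m) (hv : MemLp v 2 m) :
    (∫ x, u x * v x ∂m) ^ 2 ≤ (∫ x, u x ^ 2 ∂m) * ∫ x, v x ^ 2 ∂m := by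
  simp_rw [sq, integral_mul_eq_inner_toLp hu hv, integral_mul_eq_inner_toLp hu hu,
    integral_mul_eq_inner_toLp hv hv]
  exact real_inner_mul_inner_self_le _ _

theorem memLp_two_of_integral_mul_self_ne_zero {u : γ → ℝ} (hu : AEStronglyMeasurable u m)
    (h : ∫ x, u x * u x ∂m ≠ 0) : MemLp u 2 m := by
  rw [memLp_two_iff_integrable_sq hu]
  simp_rw [sq]
  by_contra hni
  exact h (integral_undef hni)

theorem memLp_of_orthonormal {ι : Type*} [DecidableEq ι] {e : ι → γ → ℝ}
    (he : ∀ i, Measurable (e i))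
    (horth : ∀ i j, ∫ x, e i x * e j x ∂m = if i = j then 1 else 0) (i : ι) :
    MemLp (e i) 2 m :=
  memLp_two_of_integral_mul_self_ne_zero (he i).aestronglyMeasurable (by simp [horth])

theorem abs_integral_mul_le_of_abs_le {v k : γ → ℝ} {C : ℝ} (hv : Integrable v m)
    (hk : ∀ x, |k x| ≤ C) :
    |∫ x, v x * k x ∂m| ≤ C * ∫ x, |v x| ∂m := by
  rw [← integral_const_mul (μ := m) C fun x => |v x|, ← Real.norm_eq_abs]
  refine norm_integral_le_of_norm_le (hv.abs.const_mul C) (Eventually.of_forall fun x => ?_)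
  rw [Real.norm_eq_abs, abs_mul, mul_comm]
  exact mul_le_mul_of_nonneg_right (hk x) (abs_nonneg _)

theorem integral_sq_sub_le {u v : γ → ℝ} (hu : MemLp u 2 m) (hv : MemLp v 2 m) :
    ∫ x, (u x - v x) ^ 2 ∂m ≤ 2 * ∫ x, u x ^ 2 ∂m + 2 * ∫ x, v x ^ 2 ∂m := by
  rw [← integral_const_mul, ← integral_const_mul,
    ← integral_add (hu.integrable_sq.const_mul 2) (hv.integrable_sq.const_mul 2)]
  exact integral_mono_of_nonneg (Eventually.of_forall fun _ => sq_nonneg _)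
    ((hu.integrable_sq.const_mul 2).add (hv.integrable_sq.const_mul 2))
    (Eventually.of_forall fun x => by nlinarith [sq_nonneg (u x + v x)])

theorem integral_sq_sum_mul_of_orthonormal {ι : Type*} [DecidableEq ι] {e : ι → γ → ℝ}
    (he : ∀ i, MemLp (e i) 2 m)
    (horth : ∀ i j, ∫ x, e i x * e j x ∂m = if i = j then 1 else 0) (s : Finset ι) (w : ι → ℝ) :
    ∫ x, (∑ i ∈ s, w i * e i x) ^ 2 ∂m = ∑ i ∈ s, w i ^ 2 := by
  have hint : ∀ i j, Integrable (fun x => w i * e i x * (w j * e j x)) m := fun i j =>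
    (((he i).integrable_mul (he j)).const_mul (w i * w j)).congr
      (Eventually.of_forall fun x => by simp only [Pi.mul_apply]; ring)
  calc ∫ x, (∑ i ∈ s, w i * e i x) ^ 2 ∂m
      = ∫ x, ∑ i ∈ s, ∑ j ∈ s, w i * e i x * (w j * e j x) ∂m := by
        simp_rw [sq, Finset.sum_mul_sum]
    _ = ∑ i ∈ s, ∑ j ∈ s, w i * w j * ∫ x, e i x * e j x ∂m := by
        rw [integral_finsetSum _ fun i _ => integrable_finsetSum _ fun j _ => hint i j]
        refine Finset.sum_congr rfl fun i _ => ?_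
        rw [integral_finsetSum _ fun j _ => hint i j]
        refine Finset.sum_congr rfl fun j _ => ?_
        rw [← integral_const_mul]
        exact integral_congr_ae (Eventually.of_forall fun x => by ring)
    _ = ∑ i ∈ s, w i ^ 2 := by
        simp_rw [horth, mul_ite, mul_one, mul_zero, Finset.sum_ite_eq, sq]
        exact Finset.sum_congr rfl fun i hi => if_pos hi

theorem integral_sq_sum_integral_mul_le {ι : Type*} [DecidableEq ι] {e : ι → γ → ℝ}
    (he : ∀ i, MemLp (e i) 2 m)
    (horth : ∀ i j, ∫ x, e i x * e j x ∂m = if i = j then 1 else 0) (s : Finset ι)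
    {t : γ → ℝ} (ht : MemLp t 2 m) :
    ∫ x, (∑ i ∈ s, (∫ y, t y * e i y ∂m) * e i x) ^ 2 ∂m ≤ ∫ x, t x ^ 2 ∂m := by
  have hON : Orthonormal ℝ fun i => (he i).toLp (e i) := by
    rw [orthonormal_iff_ite]
    intro i j
    rw [← integral_mul_eq_inner_toLp, horth]
  rw [integral_sq_sum_mul_of_orthonormal he horth, integral_sq_eq_norm_toLp_sq ht]
  convert hON.sum_inner_products_le (ht.toLp t) (s := s) using 2 with i
  rw [Real.norm_eq_abs, sq_abs, ← integral_mul_eq_inner_toLp]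
  simp_rw [mul_comm]

theorem tendsto_variance_of_tendsto_integral_sq_sub [IsProbabilityMeasure m]
    {u : ℕ → γ → ℝ} {v : γ → ℝ} (hu : ∀ n, MemLp (u n) 2 m) (hv : MemLp v 2 m)
    (h : Tendsto (fun n => ∫ x, (u n x - v x) ^ 2 ∂m) atTop (𝓝 0)) :
    Tendsto (fun n => Var[u n; m]) atTop (𝓝 Var[v; m]) := by
  have h1 : MemLp (fun _ => (1 : ℝ)) 2 m := memLp_const 1
  have hmoments : ∀ {w : γ → ℝ} (hw : MemLp w 2 m),
      Var[w; m] = ‖hw.toLp w‖ ^ 2 - inner ℝ (hw.toLp w) (h1.toLp _) ^ 2 := by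
    intro w hw
    rw [variance_eq_sub hw, ← integral_sq_eq_norm_toLp_sq, ← integral_mul_eq_inner_toLp]
    simp
  have hconv : Tendsto (fun n => (hu n).toLp (u n)) atTop (𝓝 (hv.toLp v)) := by
    rw [tendsto_iff_norm_sub_tendsto_zero]
    have hsq : ∀ n, ‖(hu n).toLp (u n) - hv.toLp v‖ = √(∫ x, (u n x - v x) ^ 2 ∂m) := by
      intro n
      have hsub := integral_sq_eq_norm_toLp_sq ((hu n).sub hv)
      simp only [Pi.sub_apply] at hsub
      rw [hsub, Real.sqrt_sq (norm_nonneg _), MemLp.toLp_sub]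
    simpa [hsq] using h.sqrt
  simp_rw [hmoments (hu _), hmoments hv]
  exact (hconv.norm.pow 2).sub ((hconv.inner tendsto_const_nhds).pow 2)

end L2

theorem memLp_two_prod_mul {γ δ : Type*} [MeasurableSpace γ] [MeasurableSpace δ]
    {μ : Measure γ} {ν : Measure δ} [SFinite ν] {u : γ → ℝ} {v : δ → ℝ}
    (hu : MemLp u 2 μ) (hv : MemLp v 2 ν) : MemLp (fun q => u q.1 * v q.2) 2 (μ.prod ν) := by
  refine (memLp_two_iff_integrable_sq (hu.1.comp_fst.mul hv.1.comp_snd)).2 ?_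
  exact (hu.integrable_sq.mul_prod hv.integrable_sq).congr
    (Eventually.of_forall fun q => (mul_pow _ _ _).symm)

theorem variance_mean_of_iIndepFun {Ω E : Type*} [MeasurableSpace Ω] [MeasurableSpace E]
    {μ : Measure Ω} {ν : Measure E} {ξ : ℕ → Ω → E} (hξ : ∀ j, Measurable (ξ j))
    (hlaw : ∀ j, μ.map (ξ j) = ν) (hind : iIndepFun ξ μ) {h : E → ℝ} (hh : Measurable h)
    (h2 : MemLp h 2 ν) (n : ℕ) :
    Var[fun ω => 1 / (n : ℝ) * ∑ j ∈ Finset.range n, h (ξ j ω); μ] = Var[h; ν] / n := by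
  have hmem : ∀ j, MemLp (h ∘ ξ j) 2 μ := fun j =>
    (memLp_map_measure_iff hh.aestronglyMeasurable (hξ j).aemeasurable).1 (hlaw j ▸ h2)
  have hvar : ∀ j, Var[h ∘ ξ j; μ] = Var[h; ν] := fun j => by
    rw [← hlaw j, variance_map hh.aemeasurable (hξ j).aemeasurable]
  have hsum := IndepFun.variance_sum (s := Finset.range n) (fun j _ => hmem j)
    fun j _ k _ hjk => (hind.comp (fun _ => h) fun _ => hh).indepFun hjk
  rw [variance_const_mul, show (fun ω => ∑ j ∈ Finset.range n, h (ξ j ω))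
    = ∑ j ∈ Finset.range n, h ∘ ξ j by ext; simp, hsum]
  simp only [hvar, Finset.sum_const, Finset.card_range, nsmul_eq_mul]
  rcases eq_or_ne n 0 with rfl | hn
  · simp
  · field_simp

def rectMeasure (a b c d : ℝ) : Measure (ℝ × ℝ) :=
  (volume.restrict (Icc a b)).prod (volume.restrict (Icc c d))

section Rectangle

variable {a b c d : ℝ}

instance : IsFiniteMeasure (rectMeasure a b c d) := by
  rw [rectMeasure]; infer_instance

theorem volume_restrict_Icc_prod_Icc :
    volume.restrict (Icc a b ×ˢ Icc c d) = rectMeasure a b c d := by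
  rw [rectMeasure, Measure.prod_restrict, ← Measure.volume_eq_prod]

theorem I2_eq_integral_rectMeasure {h : ℝ → ℝ → ℝ}
    (hh : Integrable (Function.uncurry h) (rectMeasure a b c d)) :
    I2 a b c d h = ∫ q, Function.uncurry h q ∂rectMeasure a b c d :=
  integral_integral hh

variable {f : ℝ → ℝ → ℝ} {Cf : ℝ}

theorem memLp_rectMeasure_of_density (hfmeas : Measurable (Function.uncurry f))
    (hf0 : ∀ x y, 0 ≤ f x y) (hfbd : ∀ x y, f x y ≤ Cf) :
    MemLp (Function.uncurry f) 2 (rectMeasure a b c d) :=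
  MemLp.of_bound hfmeas.aestronglyMeasurable Cf (Eventually.of_forall fun q => by
    rw [Real.norm_eq_abs, Function.uncurry_apply_pair, abs_of_nonneg (hf0 _ _)]
    exact hfbd _ _)

theorem nu_eq_withDensity_rectMeasure (hfsupp : ∀ x y, f x y ≠ 0 → x ∈ Icc a b ∧ y ∈ Icc c d) :
    nu f = (rectMeasure a b c d).withDensity fun q => ENNReal.ofReal (f q.1 q.2) := by
  rw [← volume_restrict_Icc_prod_Icc,
    ← withDensity_indicator (measurableSet_Icc.prod measurableSet_Icc), nu]
  congr 1
  ext q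
  by_cases hq : q ∈ Icc a b ×ˢ Icc c d
  · rw [indicator_of_mem hq]
  · rw [indicator_of_notMem hq]
    have : f q.1 q.2 = 0 := by
      by_contra hne
      exact hq (mem_prod.2 (hfsupp q.1 q.2 hne))
    simp [this]

theorem nu_le_smul_rectMeasure (hfbd : ∀ x y, f x y ≤ Cf)
    (hfsupp : ∀ x y, f x y ≠ 0 → x ∈ Icc a b ∧ y ∈ Icc c d) :
    nu f ≤ ENNReal.ofReal Cf • rectMeasure a b c d := by
  rw [nu_eq_withDensity_rectMeasure hfsupp, ← withDensity_const]
  exact withDensity_mono (Eventually.of_forall fun q => ENNReal.ofReal_le_ofReal (hfbd _ _))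

theorem memLp_nu {h : ℝ × ℝ → ℝ} (hfbd : ∀ x y, f x y ≤ Cf)
    (hfsupp : ∀ x y, f x y ≠ 0 → x ∈ Icc a b ∧ y ∈ Icc c d)
    (hh : MemLp h 2 (rectMeasure a b c d)) : MemLp h 2 (nu f) :=
  hh.of_measure_le_smul ENNReal.ofReal_ne_top (nu_le_smul_rectMeasure hfbd hfsupp)

theorem integral_nu_le {h : ℝ × ℝ → ℝ} (hf0 : ∀ x y, 0 ≤ f x y) (hfbd : ∀ x y, f x y ≤ Cf)
    (hfsupp : ∀ x y, f x y ≠ 0 → x ∈ Icc a b ∧ y ∈ Icc c d)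
    (h0 : ∀ q, 0 ≤ h q) (hh : Integrable h (rectMeasure a b c d)) :
    ∫ q, h q ∂nu f ≤ Cf * ∫ q, h q ∂rectMeasure a b c d := by
  have hle := nu_le_smul_rectMeasure hfbd hfsupp
  calc ∫ q, h q ∂nu f ≤ ∫ q, h q ∂(ENNReal.ofReal Cf • rectMeasure a b c d) :=
        integral_mono_measure hle (Eventually.of_forall h0) (hh.smul_measure ENNReal.ofReal_ne_top)
    _ = Cf * ∫ q, h q ∂rectMeasure a b c d := by
        rw [integral_smul_measure, ENNReal.toReal_ofReal ((hf0 0 0).trans (hfbd 0 0)),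
          smul_eq_mul]

theorem integral_nu_eq (hfmeas : Measurable (Function.uncurry f)) (hf0 : ∀ x y, 0 ≤ f x y)
    (hfsupp : ∀ x y, f x y ≠ 0 → x ∈ Icc a b ∧ y ∈ Icc c d) (h : ℝ × ℝ → ℝ) :
    ∫ q, h q ∂nu f = ∫ q, h q * f q.1 q.2 ∂rectMeasure a b c d := by
  rw [nu_eq_withDensity_rectMeasure hfsupp,
    integral_withDensity_eq_integral_toReal_smul
      (f := fun q : ℝ × ℝ => ENNReal.ofReal (f q.1 q.2)) hfmeas.ennreal_ofReal
      (Eventually.of_forall fun _ => ENNReal.ofReal_lt_top)]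
  simp_rw [ENNReal.toReal_ofReal (hf0 _ _), smul_eq_mul, mul_comm]

end Rectangle

section TensorBasis

variable {ι₁ ι₂ : Type*} {a b c d : ℝ} {α : ι₁ → ℝ → ℝ} {β : ι₂ → ℝ → ℝ}

theorem measurable_tns (hαmeas : ∀ i, Measurable (α i)) (hβmeas : ∀ i, Measurable (β i))
    (i : ι₁ × ι₂) : Measurable (Function.uncurry (tns α β i)) :=
  ((hαmeas i.1).comp measurable_fst).mul ((hβmeas i.2).comp measurable_snd)

theorem memLp_tns [DecidableEq ι₁] [DecidableEq ι₂]
    (hαmeas : ∀ i, Measurable (α i)) (hβmeas : ∀ i, Measurable (β i))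
    (hα : ∀ i j, (∫ x in Icc a b, α i x * α j x) = if i = j then 1 else 0)
    (hβ : ∀ i j, (∫ y in Icc c d, β i y * β j y) = if i = j then 1 else 0) (i : ι₁ × ι₂) :
    MemLp (Function.uncurry (tns α β i)) 2 (rectMeasure a b c d) :=
  memLp_two_prod_mul (memLp_of_orthonormal hαmeas hα i.1) (memLp_of_orthonormal hβmeas hβ i.2)

theorem integral_tns_mul_tns [DecidableEq ι₁] [DecidableEq ι₂]
    (hα : ∀ i j, (∫ x in Icc a b, α i x * α j x) = if i = j then 1 else 0)
    (hβ : ∀ i j, (∫ y in Icc c d, β i y * β j y) = if i = j then 1 else 0) (i j : ι₁ × ι₂) :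
    ∫ q, Function.uncurry (tns α β i) q * Function.uncurry (tns α β j) q ∂rectMeasure a b c d
      = if i = j then 1 else 0 := by
  have hsplit : ∀ q : ℝ × ℝ, Function.uncurry (tns α β i) q * Function.uncurry (tns α β j) q
      = α i.1 q.1 * α j.1 q.1 * (β i.2 q.2 * β j.2 q.2) := fun q => by
    simp only [Function.uncurry, tns]; ring
  simp_rw [hsplit]
  rw [rectMeasure, integral_prod_mul (fun x => α i.1 x * α j.1 x) (fun y => β i.2 y * β j.2 y),
    hα, hβ]
  by_cases h1 : i.1 = j.1 <;> by_cases h2 : i.2 = j.2 <;> simp [h1, h2, Prod.ext_iff]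

end TensorBasis

/-- `r_i = ρ_i - b_i`. -/
def rho {ι : Type*} (c d : ℝ) (p : ι → ℝ → ℝ → ℝ) (η : ℝ → ℝ → ℝ → ℝ) (i : ι) (x y : ℝ) : ℝ :=
  ∫ u in Icc c d, p i x u * η x u y

section Kernel

variable {ι₁ ι₂ : Type*} {a b c d : ℝ}
  {α : ι₁ → ℝ → ℝ} {β : ι₂ → ℝ → ℝ} {η : ℝ → ℝ → ℝ → ℝ} {Cη : ℝ} {f : ℝ → ℝ → ℝ} {Cf : ℝ}

theorem measurable_rho {ι : Type*} {p : ι → ℝ → ℝ → ℝ}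
    (hp : ∀ i, Measurable (Function.uncurry (p i)))
    (hηmeas : Measurable fun q : ℝ × ℝ × ℝ => η q.1 q.2.1 q.2.2) (i : ι) :
    Measurable (Function.uncurry (rho c d p η i)) := by
  have hF : Measurable fun z : (ℝ × ℝ) × ℝ => p i z.1.1 z.2 * η z.1.1 z.2 z.1.2 :=
    ((hp i).comp (measurable_fst.fst.prodMk measurable_snd)).mul
      (hηmeas.comp (measurable_fst.fst.prodMk (measurable_snd.prodMk measurable_fst.snd)))
  exact hF.stronglyMeasurable.integral_prod_right'.measurable

theorem measurable_gfun (hfmeas : Measurable (Function.uncurry f))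
    (hηmeas : Measurable fun q : ℝ × ℝ × ℝ => η q.1 q.2.1 q.2.2) :
    Measurable (Function.uncurry (gfun c d η f)) := by
  have hF : Measurable fun z : (ℝ × ℝ) × ℝ => f z.1.1 z.2 * η z.1.1 z.1.2 z.2 :=
    (hfmeas.comp (measurable_fst.fst.prodMk measurable_snd)).mul
      (hηmeas.comp (measurable_fst.fst.prodMk (measurable_fst.snd.prodMk measurable_snd)))
  exact hF.stronglyMeasurable.integral_prod_right'.measurable

theorem abs_gfun_le (hf0 : ∀ x y, 0 ≤ f x y) (hfbd : ∀ x y, f x y ≤ Cf)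
    (hηbd : ∀ x y₁ y₂, |η x y₁ y₂| ≤ Cη) (x y : ℝ) :
    |gfun c d η f x y| ≤ Cf * Cη * volume.real (Icc c d) := by
  rw [← Real.norm_eq_abs, gfun]
  refine norm_setIntegral_le_of_norm_le_const (measure_Icc_lt_top (μ := (volume : Measure ℝ)))
    fun u _ => ?_
  rw [Real.norm_eq_abs, abs_mul, abs_of_nonneg (hf0 _ _)]
  exact mul_le_mul (hfbd _ _) (hηbd _ _ _) (abs_nonneg _) ((hf0 x u).trans (hfbd x u))

theorem memLp_gfun (hfmeas : Measurable (Function.uncurry f)) (hf0 : ∀ x y, 0 ≤ f x y)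
    (hfbd : ∀ x y, f x y ≤ Cf) (hηmeas : Measurable fun q : ℝ × ℝ × ℝ => η q.1 q.2.1 q.2.2)
    (hηbd : ∀ x y₁ y₂, |η x y₁ y₂| ≤ Cη) :
    MemLp (Function.uncurry (gfun c d η f)) 2 (rectMeasure a b c d) :=
  MemLp.of_bound (measurable_gfun hfmeas hηmeas).aestronglyMeasurable _
    (Eventually.of_forall fun q => abs_gfun_le hf0 hfbd hηbd q.1 q.2)

theorem rho_tns_eq (i : ι₁ × ι₂) (x y : ℝ) :
    rho c d (tns α β) η i x y = α i.1 x * ∫ u in Icc c d, β i.2 u * η x u y := by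
  rw [rho, ← integral_const_mul]
  simp only [tns, mul_assoc]

theorem memLp_rho_tns [DecidableEq ι₁] [DecidableEq ι₂]
    (hαmeas : ∀ i, Measurable (α i)) (hβmeas : ∀ i, Measurable (β i))
    (hα : ∀ i j, (∫ x in Icc a b, α i x * α j x) = if i = j then 1 else 0)
    (hβ : ∀ i j, (∫ y in Icc c d, β i y * β j y) = if i = j then 1 else 0)
    (hηmeas : Measurable fun q : ℝ × ℝ × ℝ => η q.1 q.2.1 q.2.2)
    (hηbd : ∀ x y₁ y₂, |η x y₁ y₂| ≤ Cη) (i : ι₁ × ι₂) :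
    MemLp (Function.uncurry (rho c d (tns α β) η i)) 2 (rectMeasure a b c d) := by
  have hβi : Integrable (β i.2) (volume.restrict (Icc c d)) :=
    (memLp_of_orthonormal hβmeas hβ i.2).integrable one_le_two
  refine (((memLp_of_orthonormal hαmeas hα i.1).comp_fst _).const_mul
    (Cη * ∫ u in Icc c d, |β i.2 u|)).of_le
    (measurable_rho (measurable_tns hαmeas hβmeas) hηmeas i).aestronglyMeasurable
    (Eventually.of_forall fun q => ?_)
  rw [Real.norm_eq_abs, Real.norm_eq_abs, Function.uncurry_apply_pair, rho_tns_eq, abs_mul,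
    abs_mul, abs_of_nonneg (mul_nonneg ((abs_nonneg _).trans (hηbd 0 0 0))
      (integral_nonneg fun _ => abs_nonneg _)), mul_comm]
  exact mul_le_mul_of_nonneg_right (abs_integral_mul_le_of_abs_le hβi fun u => hηbd _ _ _)
    (abs_nonneg _)

end Kernel

def ATrho {ι : Type*} (a b c d : ℝ) (p : ι → ℝ → ℝ → ℝ) (η : ℝ → ℝ → ℝ → ℝ)
    (f : ℝ → ℝ → ℝ) (M : Finset ι) (x y : ℝ) : ℝ :=
  ∑ i ∈ M, coef a b c d p f i * rho c d p η i x y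

section Approximation

variable {ι₁ ι₂ : Type*} {a b c d : ℝ}
  {α : ι₁ → ℝ → ℝ} {β : ι₂ → ℝ → ℝ} {η : ℝ → ℝ → ℝ → ℝ} {Cη : ℝ} {f : ℝ → ℝ → ℝ} {Cf : ℝ}

theorem memLp_SM_section [DecidableEq ι₂] (hβmeas : ∀ i, Measurable (β i))
    (hβ : ∀ i j, (∫ y in Icc c d, β i y * β j y) = if i = j then 1 else 0)
    (h : ℝ → ℝ → ℝ) (M : Finset (ι₁ × ι₂)) (x : ℝ) :
    MemLp (fun u => SM a b c d (tns α β) h M x u) 2 (volume.restrict (Icc c d)) := by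
  simp only [SM, tns, ← mul_assoc]
  exact memLp_finsetSum M fun i _ => (memLp_of_orthonormal hβmeas hβ i.2).const_mul _

theorem memLp_eta_section (hηmeas : Measurable fun q : ℝ × ℝ × ℝ => η q.1 q.2.1 q.2.2)
    (hηbd : ∀ x y₁ y₂, |η x y₁ y₂| ≤ Cη) (x y : ℝ) :
    MemLp (fun u => η x u y) 2 (volume.restrict (Icc c d)) :=
  MemLp.of_bound (hηmeas.comp (measurable_const.prodMk
    (measurable_id.prodMk measurable_const))).aestronglyMeasurable Cη
    (Eventually.of_forall fun _ => hηbd _ _ _)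

theorem memLp_density_section (hfmeas : Measurable (Function.uncurry f)) (hf0 : ∀ x y, 0 ≤ f x y)
    (hfbd : ∀ x y, f x y ≤ Cf) (x : ℝ) : MemLp (fun u => f x u) 2 (volume.restrict (Icc c d)) :=
  MemLp.of_bound hfmeas.of_uncurry_left.aestronglyMeasurable Cf
    (Eventually.of_forall fun u => by
      rw [Real.norm_eq_abs, abs_of_nonneg (hf0 _ _)]; exact hfbd _ _)

theorem memLp_SM [DecidableEq ι₁] [DecidableEq ι₂]
    (hαmeas : ∀ i, Measurable (α i)) (hβmeas : ∀ i, Measurable (β i))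
    (hα : ∀ i j, (∫ x in Icc a b, α i x * α j x) = if i = j then 1 else 0)
    (hβ : ∀ i j, (∫ y in Icc c d, β i y * β j y) = if i = j then 1 else 0)
    (h : ℝ → ℝ → ℝ) (M : Finset (ι₁ × ι₂)) :
    MemLp (Function.uncurry (SM a b c d (tns α β) h M)) 2 (rectMeasure a b c d) :=
  memLp_finsetSum M fun i _ => (memLp_tns hαmeas hβmeas hα hβ i).const_mul _

theorem memLp_ATrho [DecidableEq ι₁] [DecidableEq ι₂]
    (hαmeas : ∀ i, Measurable (α i)) (hβmeas : ∀ i, Measurable (β i))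
    (hα : ∀ i j, (∫ x in Icc a b, α i x * α j x) = if i = j then 1 else 0)
    (hβ : ∀ i j, (∫ y in Icc c d, β i y * β j y) = if i = j then 1 else 0)
    (hηmeas : Measurable fun q : ℝ × ℝ × ℝ => η q.1 q.2.1 q.2.2)
    (hηbd : ∀ x y₁ y₂, |η x y₁ y₂| ≤ Cη) (M : Finset (ι₁ × ι₂)) :
    MemLp (Function.uncurry (ATrho a b c d (tns α β) η f M)) 2 (rectMeasure a b c d) :=
  memLp_finsetSum M fun i _ =>
    (memLp_rho_tns hαmeas hβmeas hα hβ hηmeas hηbd i).const_mul _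

theorem ATrho_sub_gfun_eq [DecidableEq ι₂] (hβmeas : ∀ i, Measurable (β i))
    (hβ : ∀ i j, (∫ y in Icc c d, β i y * β j y) = if i = j then 1 else 0)
    (hfmeas : Measurable (Function.uncurry f)) (hf0 : ∀ x y, 0 ≤ f x y)
    (hfbd : ∀ x y, f x y ≤ Cf) (hηmeas : Measurable fun q : ℝ × ℝ × ℝ => η q.1 q.2.1 q.2.2)
    (hηbd : ∀ x y₁ y₂, |η x y₁ y₂| ≤ Cη) (hηsym : ∀ x y₁ y₂, η x y₁ y₂ = η x y₂ y₁)
    (M : Finset (ι₁ × ι₂)) (x y : ℝ) :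
    ATrho a b c d (tns α β) η f M x y - gfun c d η f x y
      = ∫ u in Icc c d, (SM a b c d (tns α β) f M x u - f x u) * η x u y := by
  have hηsec := memLp_eta_section (c := c) (d := d) hηmeas hηbd x y
  have hfsec := memLp_density_section (c := c) (d := d) hfmeas hf0 hfbd x
  have hterm : ∀ i : ι₁ × ι₂, Integrable (fun u => coef a b c d (tns α β) f i
      * (tns α β i x u * η x u y)) (volume.restrict (Icc c d)) := fun i => by
    have := ((memLp_of_orthonormal hβmeas hβ i.2).integrable_mul hηsec).const_mul
      (coef a b c d (tns α β) f i * α i.1 x)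
    simpa only [tns, Pi.mul_apply, mul_assoc] using this
  have hATrho : ATrho a b c d (tns α β) η f M x y
      = ∫ u in Icc c d, SM a b c d (tns α β) f M x u * η x u y := by
    simp only [ATrho, rho, SM, Finset.sum_mul, ← integral_const_mul]
    rw [← integral_finsetSum M fun i _ => hterm i]
    simp only [mul_assoc]
  have hg : gfun c d η f x y = ∫ u in Icc c d, f x u * η x u y := by
    simp only [gfun, hηsym x y]
  have hSMη : Integrable (fun u => SM a b c d (tns α β) f M x u * η x u y)
      (volume.restrict (Icc c d)) := (memLp_SM_section hβmeas hβ f M x).integrable_mul hηsec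
  have hfη : Integrable (fun u => f x u * η x u y) (volume.restrict (Icc c d)) :=
    hfsec.integrable_mul hηsec
  rw [hATrho, hg, ← integral_sub hSMη hfη]
  simp only [sub_mul]

theorem sq_ATrho_sub_gfun_le [DecidableEq ι₂] (hβmeas : ∀ i, Measurable (β i))
    (hβ : ∀ i j, (∫ y in Icc c d, β i y * β j y) = if i = j then 1 else 0)
    (hfmeas : Measurable (Function.uncurry f)) (hf0 : ∀ x y, 0 ≤ f x y)
    (hfbd : ∀ x y, f x y ≤ Cf) (hηmeas : Measurable fun q : ℝ × ℝ × ℝ => η q.1 q.2.1 q.2.2)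
    (hηbd : ∀ x y₁ y₂, |η x y₁ y₂| ≤ Cη) (hηsym : ∀ x y₁ y₂, η x y₁ y₂ = η x y₂ y₁)
    (M : Finset (ι₁ × ι₂)) (x y : ℝ) :
    (ATrho a b c d (tns α β) η f M x y - gfun c d η f x y) ^ 2
      ≤ Cη ^ 2 * volume.real (Icc c d)
        * ∫ u in Icc c d, (SM a b c d (tns α β) f M x u - f x u) ^ 2 := by
  have hη2 : ∫ u in Icc c d, η x u y ^ 2 ≤ Cη ^ 2 * volume.real (Icc c d) := by
    refine (le_abs_self _).trans ?_
    rw [← Real.norm_eq_abs]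
    refine norm_setIntegral_le_of_norm_le_const
      (measure_Icc_lt_top (μ := (volume : Measure ℝ))) fun u _ => ?_
    rw [Real.norm_eq_abs, abs_pow]
    exact pow_le_pow_left₀ (abs_nonneg _) (hηbd _ _ _) 2
  rw [ATrho_sub_gfun_eq hβmeas hβ hfmeas hf0 hfbd hηmeas hηbd hηsym]
  calc (∫ u in Icc c d, (SM a b c d (tns α β) f M x u - f x u) * η x u y) ^ 2
      ≤ (∫ u in Icc c d, (SM a b c d (tns α β) f M x u - f x u) ^ 2)
          * ∫ u in Icc c d, η x u y ^ 2 :=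
        sq_integral_mul_le ((memLp_SM_section hβmeas hβ f M x).sub
          (memLp_density_section hfmeas hf0 hfbd x)) (memLp_eta_section hηmeas hηbd x y)
    _ ≤ _ := by
        rw [mul_comm]
        exact mul_le_mul_of_nonneg_right hη2 (integral_nonneg fun _ => sq_nonneg _)

theorem integral_sq_ATrho_sub_gfun_le [DecidableEq ι₁] [DecidableEq ι₂]
    (hαmeas : ∀ i, Measurable (α i)) (hβmeas : ∀ i, Measurable (β i))
    (hα : ∀ i j, (∫ x in Icc a b, α i x * α j x) = if i = j then 1 else 0)
    (hβ : ∀ i j, (∫ y in Icc c d, β i y * β j y) = if i = j then 1 else 0)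
    (hfmeas : Measurable (Function.uncurry f)) (hf0 : ∀ x y, 0 ≤ f x y)
    (hfbd : ∀ x y, f x y ≤ Cf) (hηmeas : Measurable fun q : ℝ × ℝ × ℝ => η q.1 q.2.1 q.2.2)
    (hηbd : ∀ x y₁ y₂, |η x y₁ y₂| ≤ Cη) (hηsym : ∀ x y₁ y₂, η x y₁ y₂ = η x y₂ y₁)
    (M : Finset (ι₁ × ι₂)) :
    ∫ q, (Function.uncurry (ATrho a b c d (tns α β) η f M) q
        - Function.uncurry (gfun c d η f) q) ^ 2 ∂rectMeasure a b c d
      ≤ Cη ^ 2 * volume.real (Icc c d) ^ 2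
        * I2 a b c d (fun x y => (SM a b c d (tns α β) f M x y - f x y) ^ 2) := by
  have hJ : Integrable (fun x => ∫ u in Icc c d, (SM a b c d (tns α β) f M x u - f x u) ^ 2)
      (volume.restrict (Icc a b)) :=
    ((memLp_SM hαmeas hβmeas hα hβ f M).sub
      (memLp_rectMeasure_of_density hfmeas hf0 hfbd)).integrable_sq.integral_prod_left
  calc ∫ q, (Function.uncurry (ATrho a b c d (tns α β) η f M) q
        - Function.uncurry (gfun c d η f) q) ^ 2 ∂rectMeasure a b c d
      ≤ ∫ q, Cη ^ 2 * volume.real (Icc c d)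
          * (∫ u in Icc c d, (SM a b c d (tns α β) f M q.1 u - f q.1 u) ^ 2)
          ∂rectMeasure a b c d :=
        integral_mono_of_nonneg (Eventually.of_forall fun _ => sq_nonneg _)
          ((hJ.comp_fst _).const_mul _) (Eventually.of_forall fun q =>
            sq_ATrho_sub_gfun_le hβmeas hβ hfmeas hf0 hfbd hηmeas hηbd hηsym M q.1 q.2)
    _ = _ := by
        rw [integral_const_mul, rectMeasure, integral_fun_fst
          (fun x => ∫ u in Icc c d, (SM a b c d (tns α β) f M x u - f x u) ^ 2),
          measureReal_restrict_apply_univ,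
          smul_eq_mul, I2]
        ring

end Approximation

section Coefficients

variable {ι₁ ι₂ : Type*} [DecidableEq ι₁] [DecidableEq ι₂] {a b c d : ℝ}
  {α : ι₁ → ℝ → ℝ} {β : ι₂ → ℝ → ℝ} {η : ℝ → ℝ → ℝ → ℝ} {Cη : ℝ}

theorem coef_tns_eq_integral (hαmeas : ∀ i, Measurable (α i)) (hβmeas : ∀ i, Measurable (β i))
    (hα : ∀ i j, (∫ x in Icc a b, α i x * α j x) = if i = j then 1 else 0)
    (hβ : ∀ i j, (∫ y in Icc c d, β i y * β j y) = if i = j then 1 else 0)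
    {h : ℝ → ℝ → ℝ} (hh : MemLp (Function.uncurry h) 2 (rectMeasure a b c d)) (i : ι₁ × ι₂) :
    coef a b c d (tns α β) h i
      = ∫ q, Function.uncurry h q * Function.uncurry (tns α β i) q ∂rectMeasure a b c d :=
  I2_eq_integral_rectMeasure (hh.integrable_mul (memLp_tns hαmeas hβmeas hα hβ i))

theorem cmat_tns_eq_integral (hαmeas : ∀ i, Measurable (α i)) (hβmeas : ∀ i, Measurable (β i))
    (hα : ∀ i j, (∫ x in Icc a b, α i x * α j x) = if i = j then 1 else 0)
    (hβ : ∀ i j, (∫ y in Icc c d, β i y * β j y) = if i = j then 1 else 0)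
    (hηmeas : Measurable fun q : ℝ × ℝ × ℝ => η q.1 q.2.1 q.2.2)
    (hηbd : ∀ x y₁ y₂, |η x y₁ y₂| ≤ Cη) (i i' : ι₁ × ι₂) :
    cmat a b c d (tns α β) η i i' = ∫ q, Function.uncurry (rho c d (tns α β) η i) q
      * Function.uncurry (tns α β i') q ∂rectMeasure a b c d := by
  refine Eq.trans ?_ (I2_eq_integral_rectMeasure
    (h := fun x y => rho c d (tns α β) η i x y * tns α β i' x y)
    ((memLp_rho_tns hαmeas hβmeas hα hβ hηmeas hηbd i).integrable_mul
      (memLp_tns hαmeas hβmeas hα hβ i')))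
  rw [cmat, I3, I2]
  congr 1
  funext x
  have hF : Integrable (fun z : ℝ × ℝ => tns α β i x z.1 * tns α β i' x z.2 * η x z.1 z.2)
      ((volume.restrict (Icc c d)).prod (volume.restrict (Icc c d))) := by
    have hprod := (((memLp_of_orthonormal hβmeas hβ i.2).integrable one_le_two).const_mul
      (α i.1 x)).mul_prod (((memLp_of_orthonormal hβmeas hβ i'.2).integrable one_le_two).const_mul
      (α i'.1 x))
    exact hprod.mul_bdd (hηmeas.comp (measurable_const.prodMk measurable_id)).aestronglyMeasurable
      (Eventually.of_forall fun z => hηbd _ _ _)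
  rw [integral_integral_swap hF]
  refine integral_congr_ae (Eventually.of_forall fun y => ?_)
  simp only [rho, ← integral_mul_const]
  exact integral_congr_ae (Eventually.of_forall fun u => by simp only; ring)

end Coefficients

def Wker {ι : Type*} (a b c d : ℝ) (p : ι → ℝ → ℝ → ℝ) (η : ℝ → ℝ → ℝ → ℝ)
    (f : ℝ → ℝ → ℝ) (M : Finset ι) (x y : ℝ) : ℝ :=
  ATrho a b c d p η f M x y + ∑ i ∈ M, bcoef a b c d p η f i * p i x y
  - ∑ i ∈ M, ∑ i' ∈ M, coef a b c d p f i * cmat a b c d p η i i' * p i' x y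

theorem uncurry_Lker_eq {ι : Type*} (a b c d : ℝ) (p : ι → ℝ → ℝ → ℝ) (η : ℝ → ℝ → ℝ → ℝ)
    (f : ℝ → ℝ → ℝ) (M : Finset ι) :
    Function.uncurry (Lker a b c d p η f M)
      = fun q => 2 * (Function.uncurry (Wker a b c d p η f M) q - ABterm a b c d p η f M) := by
  funext q
  simp only [Function.uncurry, Lker, Wker, ATrho, ABterm, rfun, rho, qfun, mul_sub,
    Finset.sum_sub_distrib]
  simp only [mul_comm (bcoef a b c d p η f _) (coef a b c d p f _)]
  ring

section Convergence

variable {ι₁ ι₂ : Type*} {a b c d : ℝ}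
  {α : ι₁ → ℝ → ℝ} {β : ι₂ → ℝ → ℝ} {η : ℝ → ℝ → ℝ → ℝ} {Cη : ℝ} {f : ℝ → ℝ → ℝ} {Cf : ℝ}

theorem measurable_Wker (hαmeas : ∀ i, Measurable (α i)) (hβmeas : ∀ i, Measurable (β i))
    (hηmeas : Measurable fun q : ℝ × ℝ × ℝ => η q.1 q.2.1 q.2.2) (M : Finset (ι₁ × ι₂)) :
    Measurable (Function.uncurry (Wker a b c d (tns α β) η f M)) := by
  have hp := measurable_tns hαmeas hβmeas
  have hρ := measurable_rho (c := c) (d := d) hp hηmeas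
  refine ((Finset.measurable_sum M fun i _ => (hρ i).const_mul _).add
    (Finset.measurable_sum M fun i _ => (hp i).const_mul _)).sub
    (Finset.measurable_sum M fun i _ => Finset.measurable_sum M fun i' _ => (hp i').const_mul _)

theorem memLp_Wker [DecidableEq ι₁] [DecidableEq ι₂]
    (hαmeas : ∀ i, Measurable (α i)) (hβmeas : ∀ i, Measurable (β i))
    (hα : ∀ i j, (∫ x in Icc a b, α i x * α j x) = if i = j then 1 else 0)
    (hβ : ∀ i j, (∫ y in Icc c d, β i y * β j y) = if i = j then 1 else 0)
    (hηmeas : Measurable fun q : ℝ × ℝ × ℝ => η q.1 q.2.1 q.2.2)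
    (hηbd : ∀ x y₁ y₂, |η x y₁ y₂| ≤ Cη) (M : Finset (ι₁ × ι₂)) :
    MemLp (Function.uncurry (Wker a b c d (tns α β) η f M)) 2 (rectMeasure a b c d) := by
  have hp := memLp_tns hαmeas hβmeas hα hβ
  exact ((memLp_ATrho hαmeas hβmeas hα hβ hηmeas hηbd M).add
    (memLp_finsetSum M fun i _ => (hp i).const_mul _)).sub
    (memLp_finsetSum M fun i _ => memLp_finsetSum M fun i' _ => (hp i').const_mul _)

theorem integral_ATrho_sub_gfun_mul_tns [DecidableEq ι₁] [DecidableEq ι₂]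
    (hαmeas : ∀ i, Measurable (α i)) (hβmeas : ∀ i, Measurable (β i))
    (hα : ∀ i j, (∫ x in Icc a b, α i x * α j x) = if i = j then 1 else 0)
    (hβ : ∀ i j, (∫ y in Icc c d, β i y * β j y) = if i = j then 1 else 0)
    (hfmeas : Measurable (Function.uncurry f)) (hf0 : ∀ x y, 0 ≤ f x y)
    (hfbd : ∀ x y, f x y ≤ Cf) (hηmeas : Measurable fun q : ℝ × ℝ × ℝ => η q.1 q.2.1 q.2.2)
    (hηbd : ∀ x y₁ y₂, |η x y₁ y₂| ≤ Cη) (M : Finset (ι₁ × ι₂)) (i' : ι₁ × ι₂) :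
    ∫ q, (Function.uncurry (ATrho a b c d (tns α β) η f M) q
        - Function.uncurry (gfun c d η f) q) * Function.uncurry (tns α β i') q
        ∂rectMeasure a b c d
      = ∑ i ∈ M, coef a b c d (tns α β) f i * cmat a b c d (tns α β) η i i'
        - bcoef a b c d (tns α β) η f i' := by
  have hp := memLp_tns hαmeas hβmeas hα hβ i'
  have hρp : ∀ i, Integrable (fun q => coef a b c d (tns α β) f i
      * (Function.uncurry (rho c d (tns α β) η i) q * Function.uncurry (tns α β i') q))
      (rectMeasure a b c d) := fun i =>
    ((memLp_rho_tns hαmeas hβmeas hα hβ hηmeas hηbd i).integrable_mul hp).const_mul _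
  have hATrho : ∫ q, Function.uncurry (ATrho a b c d (tns α β) η f M) q
      * Function.uncurry (tns α β i') q ∂rectMeasure a b c d
      = ∑ i ∈ M, coef a b c d (tns α β) f i * cmat a b c d (tns α β) η i i' := by
    simp only [cmat_tns_eq_integral hαmeas hβmeas hα hβ hηmeas hηbd, ← integral_const_mul]
    rw [← integral_finsetSum M fun i _ => hρp i]
    simp only [ATrho, Function.uncurry, Finset.sum_mul, mul_assoc]
  have hAp : Integrable (fun q => Function.uncurry (ATrho a b c d (tns α β) η f M) q
      * Function.uncurry (tns α β i') q) (rectMeasure a b c d) :=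
    (memLp_ATrho hαmeas hβmeas hα hβ hηmeas hηbd M).integrable_mul hp
  have hgp : Integrable (fun q => Function.uncurry (gfun c d η f) q
      * Function.uncurry (tns α β i') q) (rectMeasure a b c d) :=
    (memLp_gfun hfmeas hf0 hfbd hηmeas hηbd).integrable_mul hp
  simp only [sub_mul]
  rw [integral_sub hAp hgp, hATrho, bcoef,
    coef_tns_eq_integral hαmeas hβmeas hα hβ (memLp_gfun hfmeas hf0 hfbd hηmeas hηbd)]

theorem integral_sq_Wker_sub_gfun_le [DecidableEq ι₁] [DecidableEq ι₂]
    (hαmeas : ∀ i, Measurable (α i)) (hβmeas : ∀ i, Measurable (β i))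
    (hα : ∀ i j, (∫ x in Icc a b, α i x * α j x) = if i = j then 1 else 0)
    (hβ : ∀ i j, (∫ y in Icc c d, β i y * β j y) = if i = j then 1 else 0)
    (hfmeas : Measurable (Function.uncurry f)) (hf0 : ∀ x y, 0 ≤ f x y)
    (hfbd : ∀ x y, f x y ≤ Cf) (hηmeas : Measurable fun q : ℝ × ℝ × ℝ => η q.1 q.2.1 q.2.2)
    (hηbd : ∀ x y₁ y₂, |η x y₁ y₂| ≤ Cη) (M : Finset (ι₁ × ι₂)) :
    ∫ q, (Function.uncurry (Wker a b c d (tns α β) η f M) q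
        - Function.uncurry (gfun c d η f) q) ^ 2 ∂rectMeasure a b c d
      ≤ 4 * ∫ q, (Function.uncurry (ATrho a b c d (tns α β) η f M) q
        - Function.uncurry (gfun c d η f) q) ^ 2 ∂rectMeasure a b c d := by
  set H : ℝ × ℝ → ℝ := fun q => Function.uncurry (ATrho a b c d (tns α β) η f M) q
    - Function.uncurry (gfun c d η f) q with hHdef
  set P : ℝ × ℝ → ℝ := fun q => ∑ i ∈ M, (∫ q', H q' * Function.uncurry (tns α β i) q'
    ∂rectMeasure a b c d) * Function.uncurry (tns α β i) q with hPdef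
  have hp := memLp_tns hαmeas hβmeas hα hβ
  have hH : MemLp H 2 (rectMeasure a b c d) :=
    (memLp_ATrho hαmeas hβmeas hα hβ hηmeas hηbd M).sub (memLp_gfun hfmeas hf0 hfbd hηmeas hηbd)
  have hP : MemLp P 2 (rectMeasure a b c d) := memLp_finsetSum M fun i _ => (hp i).const_mul _
  -- `BᵀP − AᵀCP` is minus the projection of `H` onto the span of the `p_i`.
  have hdecomp : ∀ q, Function.uncurry (Wker a b c d (tns α β) η f M) q
      - Function.uncurry (gfun c d η f) q = H q - P q := fun q => by
    simp only [hHdef, hPdef, integral_ATrho_sub_gfun_mul_tns hαmeas hβmeas hα hβ hfmeas hf0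
      hfbd hηmeas hηbd M]
    simp only [Function.uncurry, Wker, sub_mul, Finset.sum_sub_distrib, Finset.sum_mul]
    rw [Finset.sum_comm (s := M) (t := M)]
    ring
  have hBessel : ∫ q, P q ^ 2 ∂rectMeasure a b c d ≤ ∫ q, H q ^ 2 ∂rectMeasure a b c d :=
    integral_sq_sum_integral_mul_le hp (integral_tns_mul_tns hα hβ) M hH
  calc ∫ q, (Function.uncurry (Wker a b c d (tns α β) η f M) q
        - Function.uncurry (gfun c d η f) q) ^ 2 ∂rectMeasure a b c d
      = ∫ q, (H q - P q) ^ 2 ∂rectMeasure a b c d := by simp only [hdecomp]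
    _ ≤ 2 * ∫ q, H q ^ 2 ∂rectMeasure a b c d + 2 * ∫ q, P q ^ 2 ∂rectMeasure a b c d :=
        integral_sq_sub_le hH hP
    _ ≤ 4 * ∫ q, H q ^ 2 ∂rectMeasure a b c d := by linarith

end Convergence

section Limit

variable {ι₁ ι₂ : Type*} [DecidableEq ι₁] [DecidableEq ι₂] {a b c d : ℝ}
  {α : ι₁ → ℝ → ℝ} {β : ι₂ → ℝ → ℝ} {η : ℝ → ℝ → ℝ → ℝ} {Cη : ℝ} {f : ℝ → ℝ → ℝ} {Cf : ℝ}

theorem tendsto_integral_sq_Wker_sub_gfun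
    (hαmeas : ∀ i, Measurable (α i)) (hβmeas : ∀ i, Measurable (β i))
    (hα : ∀ i j, (∫ x in Icc a b, α i x * α j x) = if i = j then 1 else 0)
    (hβ : ∀ i j, (∫ y in Icc c d, β i y * β j y) = if i = j then 1 else 0)
    (hfmeas : Measurable (Function.uncurry f)) (hf0 : ∀ x y, 0 ≤ f x y)
    (hfbd : ∀ x y, f x y ≤ Cf) (hfsupp : ∀ x y, f x y ≠ 0 → x ∈ Icc a b ∧ y ∈ Icc c d)
    (hηmeas : Measurable fun q : ℝ × ℝ × ℝ => η q.1 q.2.1 q.2.2)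
    (hηbd : ∀ x y₁ y₂, |η x y₁ y₂| ≤ Cη) (hηsym : ∀ x y₁ y₂, η x y₁ y₂ = η x y₂ y₁)
    {M : ℕ → Finset (ι₁ × ι₂)}
    (hM : Tendsto (fun n => I2 a b c d fun x y =>
      (SM a b c d (tns α β) f (M n) x y - f x y) ^ 2) atTop (𝓝 0)) :
    Tendsto (fun n => ∫ q, (Function.uncurry (Wker a b c d (tns α β) η f (M n)) q
      - Function.uncurry (gfun c d η f) q) ^ 2 ∂nu f) atTop (𝓝 0) := by
  have hCf : 0 ≤ Cf := (hf0 0 0).trans (hfbd 0 0)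
  have hbound : ∀ n, ∫ q, (Function.uncurry (Wker a b c d (tns α β) η f (M n)) q
      - Function.uncurry (gfun c d η f) q) ^ 2 ∂nu f
      ≤ Cf * (4 * (Cη ^ 2 * volume.real (Icc c d) ^ 2)) * I2 a b c d fun x y =>
        (SM a b c d (tns α β) f (M n) x y - f x y) ^ 2 := fun n => by
    refine (integral_nu_le hf0 hfbd hfsupp (fun _ => sq_nonneg _)
      ((memLp_Wker hαmeas hβmeas hα hβ hηmeas hηbd (M n)).sub
        (memLp_gfun hfmeas hf0 hfbd hηmeas hηbd)).integrable_sq).trans ?_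
    rw [mul_assoc Cf, mul_assoc 4]
    refine mul_le_mul_of_nonneg_left ?_ hCf
    exact (integral_sq_Wker_sub_gfun_le hαmeas hβmeas hα hβ hfmeas hf0 hfbd hηmeas hηbd
      (M n)).trans (mul_le_mul_of_nonneg_left (integral_sq_ATrho_sub_gfun_le hαmeas hβmeas hα
        hβ hfmeas hf0 hfbd hηmeas hηbd hηsym (M n)) zero_le_four)
  refine squeeze_zero (fun n => integral_nonneg fun _ => sq_nonneg _) hbound ?_
  simpa using hM.const_mul (Cf * (4 * (Cη ^ 2 * volume.real (Icc c d) ^ 2)))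

theorem Lam_eq_four_mul_variance (hfmeas : Measurable (Function.uncurry f))
    (hf0 : ∀ x y, 0 ≤ f x y) (hfbd : ∀ x y, f x y ≤ Cf)
    (hfsupp : ∀ x y, f x y ≠ 0 → x ∈ Icc a b ∧ y ∈ Icc c d) [IsProbabilityMeasure (nu f)]
    (hηmeas : Measurable fun q : ℝ × ℝ × ℝ => η q.1 q.2.1 q.2.2)
    (hηbd : ∀ x y₁ y₂, |η x y₁ y₂| ≤ Cη) :
    Lam a b c d η f = 4 * Var[Function.uncurry (gfun c d η f); nu f] := by
  have hg := memLp_gfun (a := a) (b := b) (c := c) (d := d) hfmeas hf0 hfbd hηmeas hηbd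
  have hfbd' : ∀ᵐ q ∂rectMeasure a b c d, ‖Function.uncurry f q‖ ≤ Cf :=
    Eventually.of_forall fun q => by
      show |f q.1 q.2| ≤ Cf
      rw [abs_of_nonneg (hf0 _ _)]; exact hfbd _ _
  have h2 : (I2 a b c d fun x y => gfun c d η f x y ^ 2 * f x y)
      = ∫ q, Function.uncurry (gfun c d η f) q ^ 2 ∂nu f := by
    rw [integral_nu_eq hfmeas hf0 hfsupp]
    exact I2_eq_integral_rectMeasure (hg.integrable_sq.mul_bdd hfmeas.aestronglyMeasurable hfbd')
  have h1 : (I2 a b c d fun x y => gfun c d η f x y * f x y)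
      = ∫ q, Function.uncurry (gfun c d η f) q ∂nu f := by
    rw [integral_nu_eq hfmeas hf0 hfsupp]
    exact I2_eq_integral_rectMeasure
      ((hg.integrable one_le_two).mul_bdd hfmeas.aestronglyMeasurable hfbd')
  rw [variance_eq_sub (memLp_nu hfbd hfsupp hg), Lam, h2, h1]
  rfl

theorem variance_Lker_eq (hαmeas : ∀ i, Measurable (α i)) (hβmeas : ∀ i, Measurable (β i))
    (hα : ∀ i j, (∫ x in Icc a b, α i x * α j x) = if i = j then 1 else 0)
    (hβ : ∀ i j, (∫ y in Icc c d, β i y * β j y) = if i = j then 1 else 0)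
    (hfbd : ∀ x y, f x y ≤ Cf) (hfsupp : ∀ x y, f x y ≠ 0 → x ∈ Icc a b ∧ y ∈ Icc c d)
    [IsProbabilityMeasure (nu f)] (hηmeas : Measurable fun q : ℝ × ℝ × ℝ => η q.1 q.2.1 q.2.2)
    (hηbd : ∀ x y₁ y₂, |η x y₁ y₂| ≤ Cη) (M : Finset (ι₁ × ι₂)) :
    Var[Function.uncurry (Lker a b c d (tns α β) η f M); nu f]
      = 4 * Var[Function.uncurry (Wker a b c d (tns α β) η f M); nu f] := by
  have hW := memLp_nu hfbd hfsupp (memLp_Wker (f := f) hαmeas hβmeas hα hβ hηmeas hηbd M)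
  rw [uncurry_Lker_eq, variance_const_mul, variance_sub_const hW.1]
  norm_num

theorem natCast_mul_variance_PnL {Ω : Type*} [MeasurableSpace Ω] {μ : Measure Ω}
    (hαmeas : ∀ i, Measurable (α i)) (hβmeas : ∀ i, Measurable (β i))
    (hα : ∀ i j, (∫ x in Icc a b, α i x * α j x) = if i = j then 1 else 0)
    (hβ : ∀ i j, (∫ y in Icc c d, β i y * β j y) = if i = j then 1 else 0)
    (hfbd : ∀ x y, f x y ≤ Cf) (hfsupp : ∀ x y, f x y ≠ 0 → x ∈ Icc a b ∧ y ∈ Icc c d)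
    [IsFiniteMeasure (nu f)] (hηmeas : Measurable fun q : ℝ × ℝ × ℝ => η q.1 q.2.1 q.2.2)
    (hηbd : ∀ x y₁ y₂, |η x y₁ y₂| ≤ Cη) {X Y : ℕ → Ω → ℝ}
    (hXYmeas : ∀ j, Measurable fun ω => (X j ω, Y j ω))
    (hlaw : ∀ j, Measure.map (fun ω => (X j ω, Y j ω)) μ = nu f)
    (hindep : iIndepFun (fun j ω => (X j ω, Y j ω)) μ) (M : Finset (ι₁ × ι₂)) {n : ℕ}
    (hn : n ≠ 0) :
    (n : ℝ) * Var[PnL a b c d (tns α β) η f X Y M n; μ]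
      = Var[Function.uncurry (Lker a b c d (tns α β) η f M); nu f] := by
  have hLmeas : Measurable (Function.uncurry (Lker a b c d (tns α β) η f M)) := by
    rw [uncurry_Lker_eq]
    exact ((measurable_Wker hαmeas hβmeas hηmeas M).sub_const _).const_mul _
  have hLmem : MemLp (Function.uncurry (Lker a b c d (tns α β) η f M)) 2 (nu f) := by
    rw [uncurry_Lker_eq]
    exact ((memLp_nu hfbd hfsupp (memLp_Wker hαmeas hβmeas hα hβ hηmeas hηbd M)).sub
      (memLp_const _)).const_mul _
  rw [show PnL a b c d (tns α β) η f X Y M n = fun ω => 1 / (n : ℝ) * ∑ j ∈ Finset.range n,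
      Function.uncurry (Lker a b c d (tns α β) η f M) (X j ω, Y j ω) from rfl,
    variance_mean_of_iIndepFun hXYmeas hlaw hindep hLmeas hLmem n]
  field_simp

end Limit

theorem n_variance_PnL_tendsto_Lam_general
    {Ω ι₁ ι₂ : Type*} [MeasurableSpace Ω] [DecidableEq ι₁] [DecidableEq ι₂]
    (μ : Measure Ω)
    (a b c d : ℝ)
    (α : ι₁ → ℝ → ℝ) (β : ι₂ → ℝ → ℝ)
    (hαmeas : ∀ i, Measurable (α i)) (hβmeas : ∀ i, Measurable (β i))
    (hα : ∀ i j, (∫ x in Icc a b, α i x * α j x) = if i = j then 1 else 0)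
    (hβ : ∀ i j, (∫ y in Icc c d, β i y * β j y) = if i = j then 1 else 0)
    (f : ℝ → ℝ → ℝ) (Cf : ℝ)
    (hfmeas : Measurable (Function.uncurry f))
    (hf0 : ∀ x y, 0 ≤ f x y) (hfbd : ∀ x y, f x y ≤ Cf)
    (hfsupp : ∀ x y, f x y ≠ 0 → x ∈ Icc a b ∧ y ∈ Icc c d)
    (hfprob : IsProbabilityMeasure (nu f))
    (η : ℝ → ℝ → ℝ → ℝ) (Cη : ℝ)
    (hηmeas : Measurable fun q : ℝ × ℝ × ℝ => η q.1 q.2.1 q.2.2)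
    (hηbd : ∀ x y₁ y₂, |η x y₁ y₂| ≤ Cη)
    (hηsym : ∀ x y₁ y₂, η x y₁ y₂ = η x y₂ y₁)
    (X Y : ℕ → Ω → ℝ)
    (hXYmeas : ∀ j, Measurable fun ω => (X j ω, Y j ω))
    (hlaw : ∀ j, Measure.map (fun ω => (X j ω, Y j ω)) μ = nu f)
    (hindep : iIndepFun (fun j ω => (X j ω, Y j ω)) μ)
    (M : ℕ → Finset (ι₁ × ι₂))
    (hA1b : ∀ t : ℝ → ℝ → ℝ, Measurable (Function.uncurry t) →
      IntegrableOn (fun q : ℝ × ℝ => t q.1 q.2 ^ 2) (Icc a b ×ˢ Icc c d) volume →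
      Tendsto (fun n => I2 a b c d fun x y =>
        (SM a b c d (tns α β) t (M n) x y - t x y) ^ 2) atTop (𝓝 0))
 :
    Tendsto (fun n : ℕ =>
        (n : ℝ) * variance (PnL a b c d (tns α β) η f X Y (M n) n) μ)
      atTop (𝓝 (Lam a b c d η f)) := by
  have hf2 : IntegrableOn (fun q : ℝ × ℝ => f q.1 q.2 ^ 2) (Icc a b ×ˢ Icc c d) volume := by
    rw [IntegrableOn, volume_restrict_Icc_prod_Icc]
    exact (memLp_rectMeasure_of_density hfmeas hf0 hfbd).integrable_sq
  have hW : ∀ n, MemLp (Function.uncurry (Wker a b c d (tns α β) η f (M n))) 2 (nu f) := fun n =>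
    memLp_nu hfbd hfsupp (memLp_Wker hαmeas hβmeas hα hβ hηmeas hηbd (M n))
  have hWlim := tendsto_variance_of_tendsto_integral_sq_sub hW
    (memLp_nu hfbd hfsupp (memLp_gfun hfmeas hf0 hfbd hηmeas hηbd))
    (tendsto_integral_sq_Wker_sub_gfun hαmeas hβmeas hα hβ hfmeas hf0 hfbd hfsupp hηmeas hηbd
      hηsym (hA1b f hfmeas hf2))
  rw [Lam_eq_four_mul_variance hfmeas hf0 hfbd hfsupp hηmeas hηbd]
  refine (hWlim.const_mul 4).congr' ?_
  filter_upwards [eventually_ne_atTop 0] with n hn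
  rw [natCast_mul_variance_PnL hαmeas hβmeas hα hβ hfbd hfsupp hηmeas hηbd hXYmeas hlaw hindep
    (M n) hn, variance_Lker_eq hαmeas hβmeas hα hβ hfbd hfsupp hηmeas hηbd]

/-- Lemma 8: under A1, `n Var(P_n L) → Λ(f,η)`. -/
theorem n_variance_PnL_tendsto_Lam
    {Ω ι₁ ι₂ : Type*} [MeasurableSpace Ω] [Countable ι₁] [Countable ι₂] [DecidableEq ι₁] [DecidableEq ι₂]
    (μ : Measure Ω) [IsProbabilityMeasure μ]
    (a b c d : ℝ) (hab : a < b) (hcd : c < d)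
    (α : ι₁ → ℝ → ℝ) (β : ι₂ → ℝ → ℝ)
    (hαmeas : ∀ i, Measurable (α i)) (hβmeas : ∀ i, Measurable (β i))
    (hα : ∀ i j, (∫ x in Icc a b, α i x * α j x) = if i = j then 1 else 0)
    (hβ : ∀ i j, (∫ y in Icc c d, β i y * β j y) = if i = j then 1 else 0)
    (f : ℝ → ℝ → ℝ) (Cf : ℝ)
    (hfmeas : Measurable (Function.uncurry f))
    (hf0 : ∀ x y, 0 ≤ f x y) (hfbd : ∀ x y, f x y ≤ Cf)
    (hfsupp : ∀ x y, f x y ≠ 0 → x ∈ Icc a b ∧ y ∈ Icc c d)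
    (hfprob : IsProbabilityMeasure (nu f))
    (η : ℝ → ℝ → ℝ → ℝ) (Cη : ℝ)
    (hηmeas : Measurable fun q : ℝ × ℝ × ℝ => η q.1 q.2.1 q.2.2)
    (hηbd : ∀ x y₁ y₂, |η x y₁ y₂| ≤ Cη)
    (hηsym : ∀ x y₁ y₂, η x y₁ y₂ = η x y₂ y₁)
    (X Y : ℕ → Ω → ℝ)
    (hXYmeas : ∀ j, Measurable fun ω => (X j ω, Y j ω))
    (hlaw : ∀ j, Measure.map (fun ω => (X j ω, Y j ω)) μ = nu f)
    (hindep : iIndepFun (fun j ω => (X j ω, Y j ω)) μ)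
    (cseq : ι₁ × ι₂ → ℝ) (hcpos : ∀ i, 0 < cseq i)
    (hfE : inEllipsoid a b c d (tns α β) cseq f)
    (M : ℕ → Finset (ι₁ × ι₂))
    (hA1a : ∃ lam1 lam2 : ℝ, 0 < lam1 ∧ 0 < lam2 ∧ ∀ n : ℕ, 1 ≤ n →
      lam1 * (((M n).card : ℝ) / (n : ℝ) ^ 2) ≤ supTail cseq (M n) ^ 2 ∧
        supTail cseq (M n) ^ 2 ≤ lam2 * (((M n).card : ℝ) / (n : ℝ) ^ 2))
    (hA1b : ∀ t : ℝ → ℝ → ℝ, Measurable (Function.uncurry t) →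
      IntegrableOn (fun q : ℝ × ℝ => t q.1 q.2 ^ 2) (Icc a b ×ˢ Icc c d) volume →
      Tendsto (fun n => I2 a b c d fun x y =>
        (SM a b c d (tns α β) t (M n) x y - t x y) ^ 2) atTop (𝓝 0))
 :
    Tendsto (fun n : ℕ =>
        (n : ℝ) * variance (PnL a b c d (tns α β) η f X Y (M n) n) μ)
      atTop (𝓝 (Lam a b c d η f)) :=
  n_variance_PnL_tendsto_Lam_general μ a b c d α β hαmeas hβmeas hα hβ f Cf hfmeas hf0 hfbd hfsupp
    hfprob η Cη hηmeas hηbd hηsym X Y hXYmeas hlaw hindep M hA1b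

end DaVeigaGamboa
end
end

section
/- The deterministic part of the Hoeffding decomposition converges to θ(f) fast enough: |2AᵀB − AᵀCA − θ(f)| ≤ 2 Δ_Y ‖f‖₂ ‖η‖_∞ ‖S_{M_n}f − f‖₂ ≤ 2 Δ_Y ‖f‖₂ ‖η‖_∞ (sup_{i∉M_n}|c_i|²)^{1/2}; consequently, under assumption A1 with |M_n|/n → 0, √n (2AᵀB − AᵀCA − θ(f)) → 0. -/
open MeasureTheory ProbabilityTheory Filter Set Topology

noncomputable section

namespace DaVeigaGamboa

/-!
Write `Φ v (x, y) = ∫ η(x, y, u) v(x, u) du` (`kernelOp`), `⟨·, ·⟩` for the inner product of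
`L²(dx dy)` (`l2Form`) and `s = S_M f`, so that `a_i = ⟨f, p_i⟩`, `b_i = ⟨p_i, Φ f⟩`,
`c_{ii'} = ⟨p_i, Φ p_{i'}⟩` and `θ(f) = ⟨f, Φ f⟩`. The symmetry of `η` makes
`(u, v) ↦ ⟨u, Φ v⟩` a symmetric bilinear form, and expanding it at `s - f` gives
`2AᵀB − AᵀCA − θ(f) = −⟨s − f, Φ (s − f)⟩`. Cauchy–Schwarz on each slice `y ↦ w(x, y)` bounds
this by `‖η‖_∞ Δ_Y ‖s − f‖₂²`.

By orthonormality `‖s − f‖₂² = ‖f‖₂² − Σ_{i ∈ M} a_i²`. Since `S_{M_n} f → f`, this is at most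
`Σ_{i ∉ M} a_i² ≤ sup_{i ∉ M} c_i²`, as `f` lies in the ellipsoid; A1 then gives the rate
`√n · sup_{i ∉ M_n} c_i² ≲ √(|M_n| / n) → 0`. The lower bound in A1 rules out an unbounded
`(c_i)`: every `sSup` would then be the junk value `0`, forcing `M_n = ∅`, which contradicts
`S_{M_n} 1 → 1`.
-/

open Function (uncurry)

theorem sq_integral_abs_le {α : Type*} [MeasurableSpace α] {ν : Measure α} [IsFiniteMeasure ν]
    {g : α → ℝ} (hg : MemLp g 2 ν) :
    (∫ y, |g y| ∂ν) ^ 2 ≤ ν.real univ * ∫ y, g y ^ 2 ∂ν := by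
  have hg1 : Integrable (fun y => |g y|) ν := (hg.integrable one_le_two).abs
  have hg2 : Integrable (fun y => g y ^ 2) ν := hg.integrable_sq
  -- `∫ (|g| - t)² ≥ 0` for every `t`, so this quadratic in `t` has nonpositive discriminant
  have hquad : ∀ t : ℝ,
      0 ≤ ν.real univ * (t * t) + (-2 * ∫ y, |g y| ∂ν) * t + ∫ y, g y ^ 2 ∂ν := fun t =>
    calc 0 ≤ ∫ y, (|g y| - t) ^ 2 ∂ν := integral_nonneg fun _ => sq_nonneg _
      _ = ∫ y, (g y ^ 2 + (-2 * t) * |g y| + t * t) ∂ν := by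
          congr 1; funext y; rw [sub_sq, sq_abs]; ring
      _ = _ := by
          have h12 : Integrable (fun y => g y ^ 2 + (-2 * t) * |g y|) ν :=
            hg2.add (hg1.const_mul _)
          rw [integral_add h12 (integrable_const _), integral_add hg2 (hg1.const_mul _),
            integral_const_mul, integral_const, smul_eq_mul]
          ring
  have := discrim_le_zero hquad
  rw [discrim] at this
  linarith

theorem apply_sum_smul_sub_of_isSymm {R M ι : Type*} [CommRing R] [AddCommGroup M] [Module R M]
    {B : LinearMap.BilinForm R M} (hB : B.IsSymm) (s : Finset ι) (A : ι → R) (p : ι → M)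
    (f : M) :
    B (∑ i ∈ s, A i • p i - f) (∑ i ∈ s, A i • p i - f)
      = ∑ i ∈ s, ∑ j ∈ s, A i * B (p i) (p j) * A j - 2 * ∑ i ∈ s, A i * B (p i) f
        + B f f := by
  have hss : B (∑ i ∈ s, A i • p i) (∑ j ∈ s, A j • p j)
      = ∑ i ∈ s, ∑ j ∈ s, A i * B (p i) (p j) * A j := by
    simp only [map_sum, map_smul, LinearMap.sum_apply, LinearMap.smul_apply, smul_eq_mul,
      Finset.mul_sum]
    rw [Finset.sum_comm]
    exact Finset.sum_congr rfl fun _ _ => Finset.sum_congr rfl fun _ _ => by ring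
  have hsf : B (∑ i ∈ s, A i • p i) f = ∑ i ∈ s, A i * B (p i) f := by
    simp only [map_sum, map_smul, LinearMap.sum_apply, LinearMap.smul_apply, smul_eq_mul]
  simp only [map_sub, LinearMap.sub_apply]
  rw [hss, hsf, hB.eq f, hsf]
  ring

section KernelOp

variable {ν : Measure ℝ} {η : ℝ → ℝ → ℝ → ℝ} {C : ℝ}

def kernelOp (ν : Measure ℝ) (η : ℝ → ℝ → ℝ → ℝ) (v : ℝ → ℝ → ℝ) (x y : ℝ) : ℝ :=
  ∫ u, η x y u * v x u ∂ν

theorem integrable_kernel_mul (hη : Measurable fun q : ℝ × ℝ × ℝ => η q.1 q.2.1 q.2.2)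
    (hC : ∀ x y z, |η x y z| ≤ C) {v : ℝ → ℝ → ℝ} {x : ℝ} (hv : Integrable (v x) ν) (y : ℝ) :
    Integrable (fun u => η x y u * v x u) ν :=
  hv.bdd_mul
    (hη.comp (measurable_const.prodMk (measurable_const.prodMk measurable_id))).aestronglyMeasurable
    (.of_forall fun u => (Real.norm_eq_abs _).trans_le (hC x y u))

theorem abs_kernelOp_le (hC : ∀ x y z, |η x y z| ≤ C) {v : ℝ → ℝ → ℝ} {x : ℝ}
    (hv : Integrable (v x) ν) (y : ℝ) : |kernelOp ν η v x y| ≤ C * ∫ u, |v x u| ∂ν := by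
  rw [← integral_const_mul]
  refine abs_integral_le_integral_abs.trans (integral_mono_of_nonneg
    (.of_forall fun _ => abs_nonneg _) (hv.abs.const_mul C) (.of_forall fun u => ?_))
  simp only [abs_mul]
  exact mul_le_mul_of_nonneg_right (hC x y u) (abs_nonneg _)

theorem sq_kernelOp_le [IsFiniteMeasure ν] (hC : ∀ x y z, |η x y z| ≤ C) {v : ℝ → ℝ → ℝ}
    {x : ℝ} (hv : MemLp (v x) 2 ν) (y : ℝ) :
    kernelOp ν η v x y ^ 2 ≤ C ^ 2 * ν.real univ * ∫ u, v x u ^ 2 ∂ν := by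
  have hC0 : 0 ≤ C := (abs_nonneg _).trans (hC x y y)
  calc kernelOp ν η v x y ^ 2 = |kernelOp ν η v x y| ^ 2 := (sq_abs _).symm
    _ ≤ (C * ∫ u, |v x u| ∂ν) ^ 2 := by
        gcongr; exact abs_kernelOp_le hC (hv.integrable one_le_two) y
    _ = C ^ 2 * (∫ u, |v x u| ∂ν) ^ 2 := mul_pow _ _ _
    _ ≤ C ^ 2 * (ν.real univ * ∫ u, v x u ^ 2 ∂ν) := by gcongr; exact sq_integral_abs_le hv
    _ = _ := by ring

theorem kernelOp_add (hη : Measurable fun q : ℝ × ℝ × ℝ => η q.1 q.2.1 q.2.2)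
    (hC : ∀ x y z, |η x y z| ≤ C) {v w : ℝ → ℝ → ℝ} (hv : ∀ x, Integrable (v x) ν)
    (hw : ∀ x, Integrable (w x) ν) :
    kernelOp ν η (v + w) = kernelOp ν η v + kernelOp ν η w := by
  ext x y
  simp only [kernelOp, Pi.add_apply, mul_add]
  exact integral_add (integrable_kernel_mul hη hC (hv x) y) (integrable_kernel_mul hη hC (hw x) y)

theorem kernelOp_smul (r : ℝ) (v : ℝ → ℝ → ℝ) :
    kernelOp ν η (r • v) = r • kernelOp ν η v := by
  ext x y
  simp only [kernelOp, Pi.smul_apply, smul_eq_mul, ← integral_const_mul]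
  congr 1; funext u; ring

theorem stronglyMeasurable_kernelOp [SFinite ν]
    (hη : Measurable fun q : ℝ × ℝ × ℝ => η q.1 q.2.1 q.2.2) {v : ℝ → ℝ → ℝ}
    (hv : Measurable (uncurry v)) : StronglyMeasurable (uncurry (kernelOp ν η v)) :=
  ((hη.comp (measurable_fst.fst.prodMk (measurable_fst.snd.prodMk measurable_snd))).mul
    (hv.comp (measurable_fst.fst.prodMk measurable_snd))).stronglyMeasurable.integral_prod_right'

theorem integral_mul_kernelOp (u v : ℝ → ℝ → ℝ) (x : ℝ) :
    ∫ y, u x y * kernelOp ν η v x y ∂ν = ∫ y₁, ∫ y₂, u x y₁ * η x y₁ y₂ * v x y₂ ∂ν ∂ν := by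
  simp only [kernelOp, ← integral_const_mul, mul_assoc]

end KernelOp

section SlicewiseL2

variable {μ ν : Measure ℝ} {η : ℝ → ℝ → ℝ → ℝ} {C : ℝ}

/-- Every slice, not just almost every one, is asked to lie in `L²(ν)`: this makes `kernelOp`
linear pointwise, so that `(u, v) ↦ ⟨u, Φ v⟩` is a genuine bilinear form. -/
def slicewiseL2 (μ ν : Measure ℝ) : Submodule ℝ (ℝ → ℝ → ℝ) where
  carrier := {v | Measurable (uncurry v) ∧ MemLp (uncurry v) 2 (μ.prod ν) ∧
    ∀ x, MemLp (v x) 2 ν}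
  add_mem' hv hw := ⟨hv.1.add hw.1, hv.2.1.add hw.2.1, fun x => (hv.2.2 x).add (hw.2.2 x)⟩
  zero_mem' := ⟨measurable_const, MemLp.zero, fun _ => MemLp.zero⟩
  smul_mem' r _ hv := ⟨hv.1.const_smul r, hv.2.1.const_smul r, fun x => (hv.2.2 x).const_smul r⟩

theorem mem_slicewiseL2_of_bound [IsFiniteMeasure μ] [IsFiniteMeasure ν] {v : ℝ → ℝ → ℝ}
    (hv : Measurable (uncurry v)) {K : ℝ} (hK : ∀ x y, |v x y| ≤ K) :
    v ∈ slicewiseL2 μ ν :=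
  ⟨hv, .of_bound hv.aestronglyMeasurable K (.of_forall fun z => hK z.1 z.2),
    fun x => .of_bound (hv.comp measurable_prodMk_left).aestronglyMeasurable K
      (.of_forall fun y => hK x y)⟩

theorem mem_slicewiseL2_mul {g h : ℝ → ℝ} (hg : MemLp g 2 μ) (hh : MemLp h 2 ν)
    (hgm : Measurable g) (hhm : Measurable h) :
    (fun x y => g x * h y) ∈ slicewiseL2 μ ν := by
  have hm : Measurable (uncurry fun x y => g x * h y) :=
    (hgm.comp measurable_fst).mul (hhm.comp measurable_snd)
  refine ⟨hm, (memLp_two_iff_integrable_sq hm.aestronglyMeasurable).2 ?_,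
    fun x => hh.const_mul (g x)⟩
  simpa only [uncurry, mul_pow] using hg.integrable_sq.mul_prod hh.integrable_sq

theorem kernelOp_mem_slicewiseL2 [IsFiniteMeasure ν]
    (hη : Measurable fun q : ℝ × ℝ × ℝ => η q.1 q.2.1 q.2.2) (hC : ∀ x y z, |η x y z| ≤ C)
    {v : ℝ → ℝ → ℝ} (hv : v ∈ slicewiseL2 μ ν) : kernelOp ν η v ∈ slicewiseL2 μ ν := by
  obtain ⟨hvm, hv2, hvx⟩ := hv
  have hm := (stronglyMeasurable_kernelOp (ν := ν) hη hvm).measurable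
  refine ⟨hm, (memLp_two_iff_integrable_sq hm.aestronglyMeasurable).2 ?_, fun x => ?_⟩
  · have hdom : Integrable (fun z : ℝ × ℝ => C ^ 2 * ν.real univ * ∫ u, v z.1 u ^ 2 ∂ν)
        (μ.prod ν) :=
      (hv2.integrable_sq.integral_prod_left.const_mul _).comp_fst ν
    refine hdom.mono' (hm.pow_const 2).aestronglyMeasurable (.of_forall fun z => ?_)
    rw [Real.norm_of_nonneg (sq_nonneg _)]
    exact sq_kernelOp_le hC (hvx z.1) z.2
  · exact .of_bound (hm.comp measurable_prodMk_left).aestronglyMeasurable _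
      (.of_forall fun y => abs_kernelOp_le hC ((hvx x).integrable one_le_two) y)

def kernelOpₗ [IsFiniteMeasure ν] (hη : Measurable fun q : ℝ × ℝ × ℝ => η q.1 q.2.1 q.2.2)
    (hC : ∀ x y z, |η x y z| ≤ C) : slicewiseL2 μ ν →ₗ[ℝ] slicewiseL2 μ ν where
  toFun v := ⟨kernelOp ν η v, kernelOp_mem_slicewiseL2 hη hC v.2⟩
  map_add' v w := Subtype.ext <| kernelOp_add hη hC
    (fun x => (v.2.2.2 x).integrable one_le_two) (fun x => (w.2.2.2 x).integrable one_le_two)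
  map_smul' r v := Subtype.ext <| kernelOp_smul r v

@[simp]
theorem coe_kernelOpₗ [IsFiniteMeasure ν]
    (hη : Measurable fun q : ℝ × ℝ × ℝ => η q.1 q.2.1 q.2.2) (hC : ∀ x y z, |η x y z| ≤ C)
    (v : slicewiseL2 μ ν) : (kernelOpₗ hη hC v : ℝ → ℝ → ℝ) = kernelOp ν η v :=
  rfl

theorem coe_sum_smul_sub {ι : Type*} (P : ι → slicewiseL2 μ ν) (A : ι → ℝ)
    (F : slicewiseL2 μ ν) (N : Finset ι) (x y : ℝ) :
    ((∑ i ∈ N, A i • P i - F : slicewiseL2 μ ν) : ℝ → ℝ → ℝ) x y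
      = ∑ i ∈ N, A i * (P i : ℝ → ℝ → ℝ) x y - (F : ℝ → ℝ → ℝ) x y := by
  simp [Finset.sum_apply]

theorem integrable_mul_of_mem_slicewiseL2 {u v : ℝ → ℝ → ℝ} (hu : u ∈ slicewiseL2 μ ν)
    (hv : v ∈ slicewiseL2 μ ν) : Integrable (fun z => u z.1 z.2 * v z.1 z.2) (μ.prod ν) :=
  hu.2.1.integrable_mul hv.2.1

def l2Form (μ ν : Measure ℝ) : LinearMap.BilinForm ℝ (slicewiseL2 μ ν) :=
  LinearMap.mk₂ ℝ
    (fun u v => ∫ z, (u : ℝ → ℝ → ℝ) z.1 z.2 * (v : ℝ → ℝ → ℝ) z.1 z.2 ∂μ.prod ν)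
    (fun u₁ u₂ v => by
      simp only [Submodule.coe_add, Pi.add_apply, add_mul]
      exact integral_add (integrable_mul_of_mem_slicewiseL2 u₁.2 v.2)
        (integrable_mul_of_mem_slicewiseL2 u₂.2 v.2))
    (fun r u v => by
      simp only [Submodule.coe_smul, Pi.smul_apply, smul_mul_assoc]
      exact integral_smul r _)
    (fun u v₁ v₂ => by
      simp only [Submodule.coe_add, Pi.add_apply, mul_add]
      exact integral_add (integrable_mul_of_mem_slicewiseL2 u.2 v₁.2)
        (integrable_mul_of_mem_slicewiseL2 u.2 v₂.2))
    (fun r u v => by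
      simp only [Submodule.coe_smul, Pi.smul_apply, mul_smul_comm]
      exact integral_smul r _)

theorem l2Form_apply [SFinite μ] [SFinite ν] (u v : slicewiseL2 μ ν) :
    l2Form μ ν u v = ∫ x, ∫ y, (u : ℝ → ℝ → ℝ) x y * (v : ℝ → ℝ → ℝ) x y ∂ν ∂μ :=
  integral_prod _ (integrable_mul_of_mem_slicewiseL2 u.2 v.2)

theorem isSymm_l2Form : (l2Form μ ν).IsSymm :=
  ⟨fun u v => by simp only [l2Form, LinearMap.mk₂_apply, mul_comm]⟩

theorem l2Form_sum_smul_sub_self {ι : Type*} [DecidableEq ι] (P : ι → slicewiseL2 μ ν)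
    (hP : ∀ i j, l2Form μ ν (P i) (P j) = if i = j then 1 else 0) (F : slicewiseL2 μ ν)
    (N : Finset ι) :
    l2Form μ ν (∑ i ∈ N, l2Form μ ν F (P i) • P i - F) (∑ i ∈ N, l2Form μ ν F (P i) • P i - F)
      = l2Form μ ν F F - ∑ i ∈ N, l2Form μ ν F (P i) ^ 2 := by
  rw [apply_sum_smul_sub_of_isSymm isSymm_l2Form]
  simp only [hP, mul_ite, ite_mul, mul_one, mul_zero, zero_mul, Finset.sum_ite_eq,
    isSymm_l2Form.eq (P _) F, Finset.sum_ite_mem, Finset.inter_self, sq]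
  ring

end SlicewiseL2

section KernelForm

variable {μ ν : Measure ℝ} [SFinite μ] [IsFiniteMeasure ν] {η : ℝ → ℝ → ℝ → ℝ} {C : ℝ}
  {ι : Type*}

theorem isSymm_l2Form_compl₂_kernelOpₗ
    (hη : Measurable fun q : ℝ × ℝ × ℝ => η q.1 q.2.1 q.2.2) (hC : ∀ x y z, |η x y z| ≤ C)
    (hsym : ∀ x y₁ y₂, η x y₁ y₂ = η x y₂ y₁) :
    LinearMap.BilinForm.IsSymm ((l2Form μ ν).compl₂ (kernelOpₗ hη hC)) := by
  refine ⟨fun u v => ?_⟩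
  rw [LinearMap.compl₂_apply, LinearMap.compl₂_apply, l2Form_apply, l2Form_apply]
  obtain ⟨u, hum, -, hux⟩ := u
  obtain ⟨v, hvm, -, hvx⟩ := v
  refine integral_congr_ae (.of_forall fun x => ?_)
  have hint : Integrable (uncurry fun y₁ y₂ => u x y₁ * η x y₁ y₂ * v x y₂) (ν.prod ν) := by
    refine ((((hux x).integrable one_le_two).abs.const_mul C).mul_prod
      ((hvx x).integrable one_le_two).abs).mono' ?_ (.of_forall fun z => ?_)
    · exact (((hum.comp (measurable_const.prodMk measurable_fst)).mul
        (hη.comp (measurable_const.prodMk measurable_id))).mul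
        (hvm.comp (measurable_const.prodMk measurable_snd))).aestronglyMeasurable
    · simp only [uncurry, Real.norm_eq_abs, abs_mul]
      have := mul_le_mul_of_nonneg_right (hC x z.1 z.2)
        (mul_nonneg (abs_nonneg (u x z.1)) (abs_nonneg (v x z.2)))
      linarith
  change ∫ y, u x y * kernelOp ν η v x y ∂ν = ∫ y, v x y * kernelOp ν η u x y ∂ν
  rw [integral_mul_kernelOp, integral_mul_kernelOp, integral_integral_swap hint]
  simp only [hsym x, mul_comm, mul_left_comm]

theorem abs_l2Form_kernelOpₗ_self_le
    (hη : Measurable fun q : ℝ × ℝ × ℝ => η q.1 q.2.1 q.2.2) (hC : ∀ x y z, |η x y z| ≤ C)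
    (w : slicewiseL2 μ ν) :
    |l2Form μ ν w (kernelOpₗ hη hC w)| ≤ C * ν.real univ * l2Form μ ν w w := by
  have hC0 : 0 ≤ C := (abs_nonneg _).trans (hC 0 0 0)
  obtain ⟨w, hw⟩ := w
  rw [l2Form_apply, l2Form_apply, ← integral_const_mul]
  refine abs_integral_le_integral_abs.trans (integral_mono_of_nonneg
    (.of_forall fun _ => abs_nonneg _)
    ((integrable_mul_of_mem_slicewiseL2 hw hw).integral_prod_left.const_mul _)
    (.of_forall fun x => ?_))
  have hw1 : Integrable (w x) ν := (hw.2.2 x).integrable one_le_two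
  change |∫ y, w x y * kernelOp ν η w x y ∂ν| ≤ C * ν.real univ * ∫ y, w x y * w x y ∂ν
  calc |∫ y, w x y * kernelOp ν η w x y ∂ν|
      ≤ ∫ y, |w x y| * (C * ∫ u, |w x u| ∂ν) ∂ν :=
        abs_integral_le_integral_abs.trans (integral_mono_of_nonneg
          (.of_forall fun _ => abs_nonneg _) (hw1.abs.mul_const _) (.of_forall fun y => by
            simp only [abs_mul]
            exact mul_le_mul_of_nonneg_left (abs_kernelOp_le hC hw1 y) (abs_nonneg _)))
    _ = C * (∫ u, |w x u| ∂ν) ^ 2 := by rw [integral_mul_const]; ring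
    _ ≤ C * (ν.real univ * ∫ y, w x y ^ 2 ∂ν) := by
        gcongr; exact sq_integral_abs_le (hw.2.2 x)
    _ = C * ν.real univ * ∫ y, w x y * w x y ∂ν := by simp only [sq, mul_assoc]

theorem abs_kernel_expansion_le (hη : Measurable fun q : ℝ × ℝ × ℝ => η q.1 q.2.1 q.2.2)
    (hC : ∀ x y z, |η x y z| ≤ C) (hsym : ∀ x y₁ y₂, η x y₁ y₂ = η x y₂ y₁)
    (P : ι → slicewiseL2 μ ν) (A : ι → ℝ) (F : slicewiseL2 μ ν) (N : Finset ι) :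
    |2 * ∑ i ∈ N, A i * l2Form μ ν (P i) (kernelOpₗ hη hC F)
        - ∑ i ∈ N, ∑ j ∈ N, A i * l2Form μ ν (P i) (kernelOpₗ hη hC (P j)) * A j
        - l2Form μ ν F (kernelOpₗ hη hC F)|
      ≤ C * ν.real univ * l2Form μ ν (∑ i ∈ N, A i • P i - F) (∑ i ∈ N, A i • P i - F) := by
  set w := ∑ i ∈ N, A i • P i - F
  have h := apply_sum_smul_sub_of_isSymm (isSymm_l2Form_compl₂_kernelOpₗ hη hC hsym) N A P F
  simp only [LinearMap.compl₂_apply] at h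
  calc _ = |l2Form μ ν w (kernelOpₗ hη hC w)| := by rw [h, ← abs_neg]; congr 1; ring
    _ ≤ _ := abs_l2Form_kernelOpₗ_self_le hη hC w

end KernelForm

theorem memLp_two_of_integral_mul_self_eq_one {α : Type*} [MeasurableSpace α] {μ : Measure α}
    {g : α → ℝ} (hg : Measurable g) (h : ∫ x, g x * g x ∂μ = 1) : MemLp g 2 μ := by
  refine (memLp_two_iff_integrable_sq hg.aestronglyMeasurable).2 ?_
  simp_rw [sq]
  by_contra hni
  rw [integral_undef hni] at h
  exact zero_ne_one h

section Tensor

variable {ι₁ ι₂ : Type*} {μ ν : Measure ℝ} {α : ι₁ → ℝ → ℝ} {β : ι₂ → ℝ → ℝ}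

theorem tns_mem_slicewiseL2 (hαm : ∀ i, Measurable (α i)) (hβm : ∀ j, Measurable (β j))
    (hα : ∀ i, ∫ x, α i x * α i x ∂μ = 1) (hβ : ∀ j, ∫ y, β j y * β j y ∂ν = 1)
    (i : ι₁ × ι₂) : tns α β i ∈ slicewiseL2 μ ν :=
  mem_slicewiseL2_mul (memLp_two_of_integral_mul_self_eq_one (hαm i.1) (hα i.1))
    (memLp_two_of_integral_mul_self_eq_one (hβm i.2) (hβ i.2)) (hαm i.1) (hβm i.2)

theorem integral_integral_tns_mul_tns [DecidableEq ι₁] [DecidableEq ι₂]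
    (hα : ∀ i j, ∫ x, α i x * α j x ∂μ = if i = j then 1 else 0)
    (hβ : ∀ i j, ∫ y, β i y * β j y ∂ν = if i = j then 1 else 0) (i j : ι₁ × ι₂) :
    ∫ x, ∫ y, tns α β i x y * tns α β j x y ∂ν ∂μ = if i = j then 1 else 0 := by
  have hsplit : ∀ x y, tns α β i x y * tns α β j x y
      = (α i.1 x * α j.1 x) * (β i.2 y * β j.2 y) := fun x y => by simp only [tns]; ring
  simp_rw [hsplit, integral_const_mul, integral_mul_const, hα, hβ]
  by_cases h₁ : i.1 = j.1 <;> by_cases h₂ : i.2 = j.2 <;> simp [h₁, h₂, Prod.ext_iff]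

end Tensor

section Rectangle

variable {ι : Type*} {a b c d : ℝ} {η : ℝ → ℝ → ℝ → ℝ}

theorem I2_mul_kernelOp (u v : ℝ → ℝ → ℝ) :
    I2 a b c d (fun x y => u x y * kernelOp (volume.restrict (Icc c d)) η v x y)
      = I3 a b c d (fun x y₁ y₂ => u x y₁ * η x y₁ y₂ * v x y₂) := by
  simp only [I2, I3, integral_mul_kernelOp]

theorem bcoef_eq_I2_mul_kernelOp (p : ι → ℝ → ℝ → ℝ) (f : ℝ → ℝ → ℝ) (i : ι) :
    bcoef a b c d p η f i
      = I2 a b c d (fun x y => p i x y * kernelOp (volume.restrict (Icc c d)) η f x y) := by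
  simp only [bcoef, coef, gfun, kernelOp, mul_comm]

theorem cmat_eq_I2_mul_kernelOp (p : ι → ℝ → ℝ → ℝ) (i j : ι) :
    cmat a b c d p η i j
      = I2 a b c d (fun x y => p i x y * kernelOp (volume.restrict (Icc c d)) η (p j) x y) := by
  simp only [I2_mul_kernelOp, cmat, mul_right_comm]

theorem theta_eq_I2_mul_kernelOp (f : ℝ → ℝ → ℝ) :
    theta a b c d η f
      = I2 a b c d (fun x y => f x y * kernelOp (volume.restrict (Icc c d)) η f x y) := by
  simp only [I2_mul_kernelOp, theta, mul_comm (η _ _ _)]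

theorem I2_sq_SM_sub_eq [DecidableEq ι] {p : ι → ℝ → ℝ → ℝ}
    (hp : ∀ i, p i ∈ slicewiseL2 (volume.restrict (Icc a b)) (volume.restrict (Icc c d)))
    (hpo : ∀ i j, I2 a b c d (fun x y => p i x y * p j x y) = if i = j then 1 else 0)
    {f : ℝ → ℝ → ℝ}
    (hf : f ∈ slicewiseL2 (volume.restrict (Icc a b)) (volume.restrict (Icc c d)))
    (N : Finset ι) :
    I2 a b c d (fun x y => (SM a b c d p f N x y - f x y) ^ 2)
      = I2 a b c d (fun x y => f x y ^ 2) - ∑ i ∈ N, coef a b c d p f i ^ 2 := by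
  have h := l2Form_sum_smul_sub_self (fun i => ⟨p i, hp i⟩)
    (fun i j => (l2Form_apply _ _).trans (hpo i j)) ⟨f, hf⟩ N
  simp only [l2Form_apply, coe_sum_smul_sub] at h
  simpa [I2, SM, coef, sq] using h

theorem abs_ABterm_sub_theta_le {p : ι → ℝ → ℝ → ℝ}
    (hp : ∀ i, p i ∈ slicewiseL2 (volume.restrict (Icc a b)) (volume.restrict (Icc c d)))
    {f : ℝ → ℝ → ℝ}
    (hf : f ∈ slicewiseL2 (volume.restrict (Icc a b)) (volume.restrict (Icc c d)))
    {C : ℝ} (hη : Measurable fun q : ℝ × ℝ × ℝ => η q.1 q.2.1 q.2.2)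
    (hC : ∀ x y z, |η x y z| ≤ C) (hsym : ∀ x y₁ y₂, η x y₁ y₂ = η x y₂ y₁) (hcd : c ≤ d)
    (N : Finset ι) :
    |ABterm a b c d p η f N - theta a b c d η f|
      ≤ C * (d - c) * I2 a b c d (fun x y => (SM a b c d p f N x y - f x y) ^ 2) := by
  have h := abs_kernel_expansion_le hη hC hsym (fun i => ⟨p i, hp i⟩) (coef a b c d p f)
    ⟨f, hf⟩ N
  simp only [l2Form_apply, coe_kernelOpₗ, coe_sum_smul_sub, measureReal_restrict_apply_univ,
    Real.volume_real_Icc, max_eq_left (sub_nonneg.2 hcd)] at h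
  simpa only [ABterm, bcoef_eq_I2_mul_kernelOp, cmat_eq_I2_mul_kernelOp,
    theta_eq_I2_mul_kernelOp, SM, sq, I2] using h

theorem integrableOn_sq_of_mem_slicewiseL2 {v : ℝ → ℝ → ℝ}
    (hv : v ∈ slicewiseL2 (volume.restrict (Icc a b)) (volume.restrict (Icc c d))) :
    IntegrableOn (fun q : ℝ × ℝ => v q.1 q.2 ^ 2) (Icc a b ×ˢ Icc c d) volume := by
  rw [IntegrableOn, Measure.volume_eq_prod, ← Measure.prod_restrict]
  exact hv.2.1.integrable_sq

end Rectangle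

section Tail

variable {ι : Type*} {cseq A : ι → ℝ}

theorem supTail_nonneg (cseq : ι → ℝ) (N : Finset ι) : 0 ≤ supTail cseq N :=
  Real.sSup_nonneg fun _ ⟨_, _, h⟩ => h ▸ sq_nonneg _

theorem sq_le_supTail (hB : BddAbove (range fun i => cseq i ^ 2)) {N : Finset ι} {i : ι}
    (hi : i ∉ N) : cseq i ^ 2 ≤ supTail cseq N :=
  le_csSup (hB.mono (image_subset_range _ _)) ⟨i, hi, rfl⟩

theorem supTail_eq_zero_of_not_bddAbove (hB : ¬BddAbove (range fun i => cseq i ^ 2))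
    (N : Finset ι) : supTail cseq N = 0 := by
  refine Real.sSup_of_not_bddAbove fun hN => hB ?_
  refine (hN.union (N.finite_toSet.image fun i => cseq i ^ 2).bddAbove).mono ?_
  rintro _ ⟨i, rfl⟩
  by_cases hi : i ∈ N
  · exact Or.inr ⟨i, hi, rfl⟩
  · exact Or.inl ⟨i, hi, rfl⟩

theorem sum_sq_le_supTail (hc : ∀ i, cseq i ≠ 0) (hs : Summable fun i => (A i / cseq i) ^ 2)
    (h1 : ∑' i, (A i / cseq i) ^ 2 ≤ 1) (hB : BddAbove (range fun i => cseq i ^ 2))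
    {N F : Finset ι} (hF : Disjoint F N) : ∑ i ∈ F, A i ^ 2 ≤ supTail cseq N :=
  calc ∑ i ∈ F, A i ^ 2 = ∑ i ∈ F, (A i / cseq i) ^ 2 * cseq i ^ 2 :=
        Finset.sum_congr rfl fun i _ => by field_simp [hc i]
    _ ≤ ∑ i ∈ F, (A i / cseq i) ^ 2 * supTail cseq N :=
        Finset.sum_le_sum fun i hi => mul_le_mul_of_nonneg_left
          (sq_le_supTail hB (Finset.disjoint_left.1 hF hi)) (sq_nonneg _)
    _ = (∑ i ∈ F, (A i / cseq i) ^ 2) * supTail cseq N := (Finset.sum_mul _ _ _).symm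
    _ ≤ 1 * supTail cseq N := mul_le_mul_of_nonneg_right
        ((hs.sum_le_tsum F fun i _ => sq_nonneg _).trans h1) (supTail_nonneg _ _)
    _ = supTail cseq N := one_mul _

theorem sub_sum_sq_le_supTail (hc : ∀ i, cseq i ≠ 0) (hs : Summable fun i => (A i / cseq i) ^ 2)
    (h1 : ∑' i, (A i / cseq i) ^ 2 ≤ 1) (hB : BddAbove (range fun i => cseq i ^ 2))
    {L : ℝ} {M : ℕ → Finset ι} (hL : Tendsto (fun k => L - ∑ i ∈ M k, A i ^ 2) atTop (𝓝 0))
    (N : Finset ι) : L - ∑ i ∈ N, A i ^ 2 ≤ supTail cseq N := by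
  classical
  have hlim : Tendsto (fun k => (L - ∑ i ∈ M k, A i ^ 2) + supTail cseq N) atTop
      (𝓝 (supTail cseq N)) := by simpa using hL.add_const (supTail cseq N)
  refine ge_of_tendsto' hlim fun k => ?_
  have hsplit : ∑ i ∈ M k, A i ^ 2 ≤ ∑ i ∈ M k \ N, A i ^ 2 + ∑ i ∈ N, A i ^ 2 :=
    calc ∑ i ∈ M k, A i ^ 2 ≤ ∑ i ∈ M k \ N ∪ N, A i ^ 2 :=
          Finset.sum_le_sum_of_subset_of_nonneg
            (by rw [Finset.sdiff_union_self_eq_union]; exact Finset.subset_union_left)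
            fun _ _ _ => sq_nonneg _
      _ = _ := Finset.sum_union Finset.sdiff_disjoint
  linarith [sum_sq_le_supTail hc hs h1 hB (Finset.sdiff_disjoint : Disjoint (M k \ N) N)]

end Tail

section Degenerate

variable {ι : Type*} {a b c d : ℝ}

theorem bddAbove_range_sq {cseq : ι → ℝ} {p : ι → ℝ → ℝ → ℝ} {M : ℕ → Finset ι}
    (hab : a < b) (hcd : c < d) {lam : ℝ} (hlam : 0 < lam)
    (hlow : ∀ n : ℕ, 1 ≤ n → lam * (((M n).card : ℝ) / (n : ℝ) ^ 2) ≤ supTail cseq (M n) ^ 2)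
    (hone : Tendsto (fun n => I2 a b c d fun x y =>
      (SM a b c d p (fun _ _ => 1) (M n) x y - 1) ^ 2) atTop (𝓝 0)) :
    BddAbove (range fun i => cseq i ^ 2) := by
  by_contra hB
  have hM : ∀ n, 1 ≤ n → M n = ∅ := fun n hn => by
    by_contra hne
    have hcard : (0 : ℝ) < (M n).card := by
      exact_mod_cast Finset.card_pos.2 (Finset.nonempty_iff_ne_empty.2 hne)
    have := hlow n hn
    rw [supTail_eq_zero_of_not_bddAbove hB] at this
    nlinarith [mul_pos hlam (div_pos hcard (pow_pos (Nat.cast_pos.2 hn) 2))]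
  have hvol : ∀ n, 1 ≤ n → (I2 a b c d fun x y =>
      (SM a b c d p (fun _ _ => 1) (M n) x y - 1) ^ 2) = (b - a) * (d - c) := fun n hn => by
    simp [hM n hn, I2, SM, Real.volume_real_Icc, hab.le, hcd.le]
  have h0 : (b - a) * (d - c) = 0 := tendsto_nhds_unique
    (tendsto_const_nhds.congr' (eventually_atTop.2 ⟨1, fun n hn => (hvol n hn).symm⟩)) hone
  nlinarith [mul_pos (sub_pos.2 hab) (sub_pos.2 hcd)]

end Degenerate

theorem le_mul_sqrt_mul_sqrt {E K Q F : ℝ} (hK : 0 ≤ K) (hQ : 0 ≤ Q) (hQF : Q ≤ F)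
    (hE : E ≤ K * Q) : E ≤ K * (√F * √Q) := by
  refine hE.trans (mul_le_mul_of_nonneg_left ?_ hK)
  calc Q = √Q * √Q := (Real.mul_self_sqrt hQ).symm
    _ ≤ √F * √Q := by gcongr

theorem sqrt_mul_le_sqrt_mul_sqrt_div {s lam m n : ℝ} (hn : 0 < n) (hs : 0 ≤ s) (hlam : 0 ≤ lam)
    (h : s ^ 2 ≤ lam * (m / n ^ 2)) : √n * s ≤ √lam * √(m / n) := by
  rw [← Real.sqrt_sq hs, ← Real.sqrt_mul hn.le, ← Real.sqrt_mul hlam]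
  refine Real.sqrt_le_sqrt ?_
  calc n * s ^ 2 ≤ n * (lam * (m / n ^ 2)) := by gcongr
    _ = lam * (m / n) := by field_simp

theorem tendsto_sqrt_mul_of_abs_le {E s m : ℕ → ℝ} {K lam : ℝ} (hK : 0 ≤ K) (hlam : 0 ≤ lam)
    (hs : ∀ n, 0 ≤ s n) (hE : ∀ n, |E n| ≤ K * s n)
    (hsm : ∀ n : ℕ, 1 ≤ n → s n ^ 2 ≤ lam * (m n / (n : ℝ) ^ 2))
    (hm : Tendsto (fun n : ℕ => m n / n) atTop (𝓝 0)) :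
    Tendsto (fun n : ℕ => √n * E n) atTop (𝓝 0) := by
  refine squeeze_zero_norm' (a := fun n : ℕ => K * (√lam * √(m n / n))) ?_
    (by simpa using (hm.sqrt.const_mul √lam).const_mul K)
  filter_upwards [eventually_ge_atTop 1] with n hn
  rw [Real.norm_eq_abs, abs_mul, abs_of_nonneg (Real.sqrt_nonneg _)]
  calc √n * |E n| ≤ √n * (K * s n) := mul_le_mul_of_nonneg_left (hE n) (Real.sqrt_nonneg _)
    _ = K * (√n * s n) := by ring
    _ ≤ K * (√lam * √(m n / n)) := mul_le_mul_of_nonneg_left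
        (sqrt_mul_le_sqrt_mul_sqrt_div (Nat.cast_pos.2 hn) (hs n) hlam (hsm n hn)) hK

theorem ABterm_tendsto_theta_general
    {ι₁ ι₂ : Type*} [DecidableEq ι₁] [DecidableEq ι₂]
    (a b c d : ℝ) (hab : a < b) (hcd : c < d)
    (α : ι₁ → ℝ → ℝ) (β : ι₂ → ℝ → ℝ)
    (hαmeas : ∀ i, Measurable (α i)) (hβmeas : ∀ i, Measurable (β i))
    (hα : ∀ i j, (∫ x in Icc a b, α i x * α j x) = if i = j then 1 else 0)
    (hβ : ∀ i j, (∫ y in Icc c d, β i y * β j y) = if i = j then 1 else 0)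
    (f : ℝ → ℝ → ℝ) (Cf : ℝ)
    (hfmeas : Measurable (Function.uncurry f))
    (hf0 : ∀ x y, 0 ≤ f x y) (hfbd : ∀ x y, f x y ≤ Cf)
    (η : ℝ → ℝ → ℝ → ℝ) (Cη : ℝ)
    (hηmeas : Measurable fun q : ℝ × ℝ × ℝ => η q.1 q.2.1 q.2.2)
    (hηbd : ∀ x y₁ y₂, |η x y₁ y₂| ≤ Cη)
    (hηsym : ∀ x y₁ y₂, η x y₁ y₂ = η x y₂ y₁)
    (cseq : ι₁ × ι₂ → ℝ) (hcpos : ∀ i, 0 < cseq i)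
    (hfE : inEllipsoid a b c d (tns α β) cseq f)
    (M : ℕ → Finset (ι₁ × ι₂))
    (hA1a : ∃ lam1 lam2 : ℝ, 0 < lam1 ∧ 0 < lam2 ∧ ∀ n : ℕ, 1 ≤ n →
      lam1 * (((M n).card : ℝ) / (n : ℝ) ^ 2) ≤ supTail cseq (M n) ^ 2 ∧
        supTail cseq (M n) ^ 2 ≤ lam2 * (((M n).card : ℝ) / (n : ℝ) ^ 2))
    (hA1b : ∀ t : ℝ → ℝ → ℝ, Measurable (Function.uncurry t) →
      IntegrableOn (fun q : ℝ × ℝ => t q.1 q.2 ^ 2) (Icc a b ×ˢ Icc c d) volume →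
      Tendsto (fun n => I2 a b c d fun x y =>
        (SM a b c d (tns α β) t (M n) x y - t x y) ^ 2) atTop (𝓝 0))
    (hMn : Tendsto (fun n => ((M n).card : ℝ) / n) atTop (𝓝 0)) :
    (∀ n : ℕ,
      |ABterm a b c d (tns α β) η f (M n) - theta a b c d η f|
        ≤ 2 * (d - c) * norm2 a b c d f * Cη *
            norm2 a b c d (fun x y => SM a b c d (tns α β) f (M n) x y - f x y)
      ∧ 2 * (d - c) * norm2 a b c d f * Cη *
            norm2 a b c d (fun x y => SM a b c d (tns α β) f (M n) x y - f x y)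
          ≤ 2 * (d - c) * norm2 a b c d f * Cη * Real.sqrt (supTail cseq (M n)))
    ∧ Tendsto (fun n : ℕ => Real.sqrt n *
        (ABterm a b c d (tns α β) η f (M n) - theta a b c d η f)) atTop (𝓝 0) := by
  obtain ⟨lam1, lam2, hlam1, hlam2, hA1⟩ := hA1a
  have hf : f ∈ slicewiseL2 (volume.restrict (Icc a b)) (volume.restrict (Icc c d)) :=
    mem_slicewiseL2_of_bound hfmeas fun x y => abs_le.2 ⟨by linarith [hf0 x y, hfbd x y], hfbd x y⟩
  have hp := tns_mem_slicewiseL2 hαmeas hβmeas (fun i => (hα i i).trans (if_pos rfl))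
    (fun j => (hβ j j).trans (if_pos rfl))
  have hpyth := I2_sq_SM_sub_eq hp (integral_integral_tns_mul_tns hα hβ) hf
  have hAB := abs_ABterm_sub_theta_le hp hf hηmeas hηbd hηsym hcd.le
  have hB := bddAbove_range_sq hab hcd hlam1 (fun n hn => (hA1 n hn).1)
    (hA1b _ measurable_const (integrableOn_sq_of_mem_slicewiseL2
      (mem_slicewiseL2_of_bound measurable_const fun _ _ => abs_one.le)))
  have htail := sub_sum_sq_le_supTail (fun i => (hcpos i).ne') hfE.1 hfE.2 hB
    (by simpa only [hpyth] using hA1b f hfmeas (integrableOn_sq_of_mem_slicewiseL2 hf))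
  have hQ : ∀ N, 0 ≤ (I2 a b c d fun x y => (SM a b c d (tns α β) f N x y - f x y) ^ 2) ∧
      (I2 a b c d fun x y => (SM a b c d (tns α β) f N x y - f x y) ^ 2)
        ≤ (I2 a b c d fun x y => f x y ^ 2) ∧
      (I2 a b c d fun x y => (SM a b c d (tns α β) f N x y - f x y) ^ 2) ≤ supTail cseq N :=
    fun N => ⟨integral_nonneg fun _ => integral_nonneg fun _ => sq_nonneg _, by
      rw [hpyth]; exact ⟨sub_le_self _ (Finset.sum_nonneg fun _ _ => sq_nonneg _), htail N⟩⟩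
  have hCη : 0 ≤ Cη := (abs_nonneg _).trans (hηbd 0 0 0)
  have hK : 0 ≤ Cη * (d - c) := mul_nonneg hCη (sub_pos.2 hcd).le
  refine ⟨fun n => ⟨?_, ?_⟩, tendsto_sqrt_mul_of_abs_le hK hlam2.le (fun n => supTail_nonneg _ _)
    (fun n => (hAB _).trans (mul_le_mul_of_nonneg_left (hQ _).2.2 hK)) (fun n hn => (hA1 n hn).2)
    hMn⟩
  · calc _ ≤ Cη * (d - c) * (norm2 a b c d f * norm2 a b c d _) :=
          le_mul_sqrt_mul_sqrt hK (hQ (M n)).1 (hQ (M n)).2.1 (hAB (M n))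
      _ ≤ 2 * (Cη * (d - c) * (norm2 a b c d f * norm2 a b c d _)) :=
          le_mul_of_one_le_left (mul_nonneg hK (mul_nonneg (Real.sqrt_nonneg _)
            (Real.sqrt_nonneg _))) one_le_two
      _ = _ := by ring
  · exact mul_le_mul_of_nonneg_left (Real.sqrt_le_sqrt (hQ (M n)).2.2)
      (mul_nonneg (mul_nonneg (by linarith) (Real.sqrt_nonneg _)) hCη)

/-- Lemma 10: the deterministic part `2AᵀB − AᵀCA` of the Hoeffding
decomposition converges to `θ(f)` fast enough: explicit bounds and
`√n (2AᵀB − AᵀCA − θ(f)) → 0` when `|M_n|/n → 0`. -/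
theorem ABterm_tendsto_theta
    {ι₁ ι₂ : Type*} [Countable ι₁] [Countable ι₂] [DecidableEq ι₁] [DecidableEq ι₂]
    (a b c d : ℝ) (hab : a < b) (hcd : c < d)
    (α : ι₁ → ℝ → ℝ) (β : ι₂ → ℝ → ℝ)
    (hαmeas : ∀ i, Measurable (α i)) (hβmeas : ∀ i, Measurable (β i))
    (hα : ∀ i j, (∫ x in Icc a b, α i x * α j x) = if i = j then 1 else 0)
    (hβ : ∀ i j, (∫ y in Icc c d, β i y * β j y) = if i = j then 1 else 0)
    (f : ℝ → ℝ → ℝ) (Cf : ℝ)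
    (hfmeas : Measurable (Function.uncurry f))
    (hf0 : ∀ x y, 0 ≤ f x y) (hfbd : ∀ x y, f x y ≤ Cf)
    (hfsupp : ∀ x y, f x y ≠ 0 → x ∈ Icc a b ∧ y ∈ Icc c d)
    (hfprob : IsProbabilityMeasure (nu f))
    (η : ℝ → ℝ → ℝ → ℝ) (Cη : ℝ)
    (hηmeas : Measurable fun q : ℝ × ℝ × ℝ => η q.1 q.2.1 q.2.2)
    (hηbd : ∀ x y₁ y₂, |η x y₁ y₂| ≤ Cη)
    (hηsym : ∀ x y₁ y₂, η x y₁ y₂ = η x y₂ y₁)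
    (cseq : ι₁ × ι₂ → ℝ) (hcpos : ∀ i, 0 < cseq i)
    (hfE : inEllipsoid a b c d (tns α β) cseq f)
    (M : ℕ → Finset (ι₁ × ι₂))
    (hA1a : ∃ lam1 lam2 : ℝ, 0 < lam1 ∧ 0 < lam2 ∧ ∀ n : ℕ, 1 ≤ n →
      lam1 * (((M n).card : ℝ) / (n : ℝ) ^ 2) ≤ supTail cseq (M n) ^ 2 ∧
        supTail cseq (M n) ^ 2 ≤ lam2 * (((M n).card : ℝ) / (n : ℝ) ^ 2))
    (hA1b : ∀ t : ℝ → ℝ → ℝ, Measurable (Function.uncurry t) →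
      IntegrableOn (fun q : ℝ × ℝ => t q.1 q.2 ^ 2) (Icc a b ×ˢ Icc c d) volume →
      Tendsto (fun n => I2 a b c d fun x y =>
        (SM a b c d (tns α β) t (M n) x y - t x y) ^ 2) atTop (𝓝 0))
    (hMn : Tendsto (fun n => ((M n).card : ℝ) / n) atTop (𝓝 0)) :
    (∀ n : ℕ,
      |ABterm a b c d (tns α β) η f (M n) - theta a b c d η f|
        ≤ 2 * (d - c) * norm2 a b c d f * Cη *
            norm2 a b c d (fun x y => SM a b c d (tns α β) f (M n) x y - f x y)
      ∧ 2 * (d - c) * norm2 a b c d f * Cη *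
            norm2 a b c d (fun x y => SM a b c d (tns α β) f (M n) x y - f x y)
          ≤ 2 * (d - c) * norm2 a b c d f * Cη * Real.sqrt (supTail cseq (M n)))
    ∧ Tendsto (fun n : ℕ => Real.sqrt n *
        (ABterm a b c d (tns α β) η f (M n) - theta a b c d η f)) atTop (𝓝 0) :=
  ABterm_tendsto_theta_general a b c d hab hcd α β hαmeas hβmeas hα hβ f Cf hfmeas hf0 hfbd η Cη
    hηmeas hηbd hηsym cseq hcpos hfE M hA1a hA1b hMn

end DaVeigaGamboa
end
end
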